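/- arXiv:1911.05615 — 6 statements merged into one kernel-verified Lean document; each statement's English description precedes it below -/
import Mathlib

section
/- If G(V,E) is a chordal graph with maximal cliques C_1,...,C_p, then a symmetric matrix S supported on E (S_ij = 0 whenever i ≠ j and (i,j) ∉ E) is positive semidefinite if and only if there exist positive semidefinite matrices S_ℓ of dimension |C_ℓ| such that S = Σ_ℓ T_ℓ^T S_ℓ T_ℓ, where T_ℓ is the 0/1 entry-selector matrix of clique C_ℓ. -/
open Matrix

/-- A graph is chordal if every cycle of length greater than three has a chord. -/
def IsChordal {V : Type*} (G : SimpleGraph V) : Prop :=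
  ∀ (n : ℕ), 3 < n → ∀ f : ZMod n → V, Function.Injective f →
    (∀ i, G.Adj (f i) (f (i + 1))) →
    ∃ i j : ZMod n, i ≠ j ∧ j ≠ i + 1 ∧ i ≠ j + 1 ∧ G.Adj (f i) (f j)

/-- A maximal clique of `G`, as a finite vertex set. -/
def IsMaxClique {V : Type*} (G : SimpleGraph V) (C : Finset V) : Prop :=
  G.IsClique (C : Set V) ∧ ∀ D : Finset V, G.IsClique (D : Set V) → C ⊆ D → C = D

/-- The 0/1 entry-selector matrix `T_C ∈ ℝ^{|C| × n}` of a vertex set `C`. -/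
def selector {n : ℕ} (C : Finset (Fin n)) : Matrix C (Fin n) ℝ :=
  fun i j => if (i : Fin n) = j then 1 else 0

namespace AglerAux

variable {V : Type*} [DecidableEq V]

/-- Restriction of `G` to a vertex set `s` (as a graph on the ambient type). -/
def Gr (G : SimpleGraph V) (s : Set V) : SimpleGraph V where
  Adj x y := G.Adj x y ∧ x ∈ s ∧ y ∈ s
  symm := ⟨fun x y ⟨h, hx, hy⟩ => ⟨h.symm, hy, hx⟩⟩
  loopless := ⟨fun x ⟨h, _, _⟩ => G.ne_of_adj h rfl⟩

lemma gr_adj {G : SimpleGraph V} {s : Set V} {x y : V} :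
    (Gr G s).Adj x y ↔ G.Adj x y ∧ x ∈ s ∧ y ∈ s := Iff.rfl

/-- All support vertices of a walk in `Gr G s` lie in `s` if the start does. -/
lemma support_mem {G : SimpleGraph V} {s : Set V} {u v : V}
    (w : (Gr G s).Walk u v) (hu : u ∈ s) : ∀ x ∈ w.support, x ∈ s := by
  induction w with
  | nil => intro x hx; simp at hx; subst hx; exact hu
  | cons h w ih =>
    intro x hx
    rcases List.mem_cons.1 (by simpa using hx) with rfl | hx'
    · exact hu
    · exact ih h.2.2 x hx'

lemma reachable_of_subset {G : SimpleGraph V} {s t : Set V} {u v : V}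
    (w : (Gr G s).Walk u v) (hsup : ∀ x ∈ w.support, x ∈ t) :
    (Gr G t).Reachable u v := by
  induction w with
  | nil => exact SimpleGraph.Reachable.refl _
  | @cons a b c h w ih =>
    have ha : a ∈ t := hsup a (by simp)
    have hb : b ∈ t := hsup b (by
      simp only [SimpleGraph.Walk.support_cons, List.mem_cons]
      exact Or.inr (SimpleGraph.Walk.start_mem_support w))
    have hr : (Gr G t).Reachable b c := ih (fun x hx => hsup x (by
      simp only [SimpleGraph.Walk.support_cons, List.mem_cons]
      exact Or.inr hx))
    have hadj : (Gr G t).Adj a b := ⟨h.1, ha, hb⟩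
    exact hadj.reachable.trans hr

lemma reach_mem {G : SimpleGraph V} {s : Set V} {u v : V}
    (h : (Gr G s).Reachable u v) (hu : u ∈ s) : v ∈ s := by
  obtain ⟨w⟩ := h
  exact support_mem w hu v (SimpleGraph.Walk.end_mem_support w)

lemma reach_support {G : SimpleGraph V} {u v : V} (w : G.Walk u v) :
    ∀ x ∈ w.support, G.Reachable u x := fun x hx => ⟨w.takeUntil x hx⟩

/-- A vertex with no neighbours reaches only itself. -/
lemma not_reachable_of_no_nbr {G : SimpleGraph V} {a b : V}
    (h : ∀ y, ¬ G.Adj a y) (hab : a ≠ b) : ¬ G.Reachable a b := by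
  intro hr
  obtain ⟨w⟩ := hr
  cases w with
  | nil => exact hab rfl
  | cons h' _ => exact h _ h'

/-- Split a walk at position `p`. -/
lemma exists_split {G : SimpleGraph V} {u v : V} (w : G.Walk u v) :
    ∀ p, p ≤ w.length →
      ∃ (w1 : G.Walk u (w.getVert p)) (w2 : G.Walk (w.getVert p) v),
        w1.length = p ∧ w2.length = w.length - p := by
  induction w with
  | nil =>
    intro p hp
    simp at hp; subst hp
    exact ⟨SimpleGraph.Walk.nil, SimpleGraph.Walk.nil, rfl, rfl⟩
  | @cons a b c h w ih =>
    intro p hp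
    cases p with
    | zero =>
      exact ⟨SimpleGraph.Walk.nil, SimpleGraph.Walk.cons h w, rfl, rfl⟩
    | succ q =>
      have hq : q ≤ w.length := by simpa using hp
      obtain ⟨w1, w2, h1, h2⟩ := ih q hq
      exact ⟨SimpleGraph.Walk.cons h w1, w2, by simp [h1], by simpa using h2⟩

/-- On a geodesic, `getVert` is injective. -/
lemma geodesic_getVert_inj {G : SimpleGraph V} {u v : V} (w : G.Walk u v)
    (hw : w.length = G.dist u v) {p q : ℕ} (hpq : p ≤ q) (hq : q ≤ w.length)
    (heq : w.getVert p = w.getVert q) : p = q := by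
  obtain ⟨w1, _, h1, _⟩ := exists_split w p (le_trans hpq hq)
  obtain ⟨_, w2, _, h2⟩ := exists_split w q hq
  have : G.dist u v ≤ (w1.append (w2.copy heq.symm rfl)).length := SimpleGraph.dist_le _
  rw [SimpleGraph.Walk.length_append, SimpleGraph.Walk.length_copy, h1, h2] at this
  omega

/-- On a geodesic there are no chords. -/
lemma geodesic_no_chord {G : SimpleGraph V} {u v : V} (w : G.Walk u v)
    (hw : w.length = G.dist u v) {p q : ℕ} (hpq : p + 2 ≤ q) (hq : q ≤ w.length)
    (hadj : G.Adj (w.getVert p) (w.getVert q)) : False := by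
  obtain ⟨w1, _, h1, _⟩ := exists_split w p (by omega)
  obtain ⟨_, w2, _, h2⟩ := exists_split w q hq
  have : G.dist u v ≤ (w1.append (SimpleGraph.Walk.cons hadj w2)).length :=
    SimpleGraph.dist_le _
  rw [SimpleGraph.Walk.length_append, SimpleGraph.Walk.length_cons, h1, h2] at this
  omega

end AglerAux

namespace AglerAux

variable {V : Type*} [DecidableEq V]

lemma length_ge_two {G : SimpleGraph V} {s0 : Set V} {s t : V}
    (w : (Gr G s0).Walk s t) (hst : s ≠ t) (hadj : ¬ G.Adj s t) : 2 ≤ w.length := by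
  by_contra h
  push_neg at h
  interval_cases hlen : w.length
  · exact hst ((SimpleGraph.Walk.eq_of_length_eq_zero hlen))
  · have h1 := w.adj_getVert_succ (by omega : 0 < w.length)
    rw [SimpleGraph.Walk.getVert_zero] at h1
    have : w.getVert 1 = t := by
      have := w.getVert_length
      rwa [hlen] at this
    rw [this] at h1
    exact hadj h1.1

lemma no_sep_config {G : SimpleGraph V} (hG : IsChordal G) {A B : Set V} {s t : V}
    (hdisj : ∀ x, x ∈ A → x ∈ B → False)
    (hsA : s ∉ A) (hsB : s ∉ B) (htA : t ∉ A) (htB : t ∉ B)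
    (hst : s ≠ t) (hadj : ¬ G.Adj s t)
    (hsep : ∀ x ∈ A, ∀ y ∈ B, ¬ G.Adj x y)
    (hrA : (Gr G (A ∪ {s, t})).Reachable s t)
    (hrB : (Gr G (B ∪ {s, t})).Reachable s t) : False := by
  classical
  obtain ⟨PA, hPA⟩ := hrA.exists_walk_length_eq_dist
  obtain ⟨PB, hPB⟩ := hrB.symm.exists_walk_length_eq_dist
  set k := PA.length with hk_def
  set m := PB.length with hm_def
  have hk : 2 ≤ k := length_ge_two PA hst hadj
  have hm : 2 ≤ m := length_ge_two PB (Ne.symm hst) (fun h => hadj h.symm)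
  -- membership of walk vertices
  have memsupA : ∀ j, j ≤ k → PA.getVert j ∈ A ∪ {s, t} := by
    intro j hj
    rcases Nat.eq_zero_or_pos j with rfl | hj0
    · rw [SimpleGraph.Walk.getVert_zero]; right; left; rfl
    · have := PA.adj_getVert_succ (i := j - 1) (by omega)
      have h2 := this.2.2
      have : j - 1 + 1 = j := by omega
      rwa [this] at h2
  have memsupB : ∀ j, j ≤ m → PB.getVert j ∈ B ∪ {s, t} := by
    intro j hj
    rcases Nat.eq_zero_or_pos j with rfl | hj0
    · rw [SimpleGraph.Walk.getVert_zero]; right; right; rfl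
    · have := PB.adj_getVert_succ (i := j - 1) (by omega)
      have h2 := this.2.2
      have : j - 1 + 1 = j := by omega
      rwa [this] at h2
  have injA : ∀ p q, p ≤ q → q ≤ k → PA.getVert p = PA.getVert q → p = q :=
    fun p q h1 h2 h3 => geodesic_getVert_inj PA hPA h1 h2 h3
  have injB : ∀ p q, p ≤ q → q ≤ m → PB.getVert p = PB.getVert q → p = q :=
    fun p q h1 h2 h3 => geodesic_getVert_inj PB hPB h1 h2 h3
  have memA : ∀ j, 1 ≤ j → j < k → PA.getVert j ∈ A := by
    intro j h1 h2
    rcases memsupA j (by omega) with h | h | h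
    · exact h
    · exfalso
      have : PA.getVert 0 = PA.getVert j := by rw [SimpleGraph.Walk.getVert_zero, h]
      have := injA 0 j (by omega) (by omega) this
      omega
    · exfalso
      have : PA.getVert j = PA.getVert k := by rw [PA.getVert_length, h]
      have := injA j k (by omega) le_rfl this
      omega
  have memB : ∀ j, 1 ≤ j → j < m → PB.getVert j ∈ B := by
    intro j h1 h2
    rcases memsupB j (by omega) with h | h | h
    · exact h
    · exfalso
      have : PB.getVert j = PB.getVert m := by rw [PB.getVert_length, h]
      have := injB j m (by omega) le_rfl this
      omega
    · exfalso
      have : PB.getVert 0 = PB.getVert j := by rw [SimpleGraph.Walk.getVert_zero, h]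
      have := injB 0 j (by omega) (by omega) this
      omega
  set N := k + m with hN_def
  haveI : NeZero N := ⟨by omega⟩
  haveI : Fact (1 < N) := ⟨by omega⟩
  set cyc : ℕ → V := fun j => if j < k then PA.getVert j else PB.getVert (j - k) with hcyc
  have cycA : ∀ j, j ≤ k → cyc j = PA.getVert j := by
    intro j hj
    rcases lt_or_eq_of_le hj with h | rfl
    · simp [hcyc, h]
    · simp [hcyc, hk_def, PA.getVert_length, SimpleGraph.Walk.getVert_zero]
  have cycB : ∀ j, k ≤ j → cyc j = PB.getVert (j - k) := by
    intro j hj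
    simp [hcyc, Nat.not_lt.2 hj]
  have cyc0 : cyc 0 = s := by rw [cycA 0 (by omega), SimpleGraph.Walk.getVert_zero]
  have cycBs : PB.getVert m = s := PB.getVert_length
  -- no ordered chord
  have core : ∀ p q, p + 2 ≤ q → q < N → (q = N - 1 → 1 ≤ p) →
      G.Adj (cyc p) (cyc q) → False := by
    intro p q hgap hqN hwrap hchord
    rcases le_or_gt q k with hq | hq
    · -- chord within PA
      rw [cycA p (by omega), cycA q hq] at hchord
      exact geodesic_no_chord PA hPA hgap hq
        ⟨hchord, memsupA p (by omega), memsupA q hq⟩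
    · have hq1 : 1 ≤ q - k := by omega
      have hq2 : q - k ≤ m - 1 := by omega
      rw [cycB q (by omega)] at hchord
      rcases le_or_gt k p with hp | hp
      · -- chord within PB
        rw [cycB p hp] at hchord
        exact geodesic_no_chord PB hPB (by omega : (p - k) + 2 ≤ q - k) (by omega)
          ⟨hchord, memsupB (p - k) (by omega), memsupB (q - k) (by omega)⟩
      · rcases Nat.eq_zero_or_pos p with rfl | hp1
        · -- chord from s into interior of PB
          rw [cyc0] at hchord
          have hqN2 : q ≤ N - 2 := by
            rcases Nat.lt_or_ge q (N - 1) with h | h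
            · omega
            · have : q = N - 1 := by omega
              have := hwrap this
              omega
          refine geodesic_no_chord PB hPB (?_ : (q - k) + 2 ≤ m) le_rfl ?_
          · omega
          · exact ⟨by rw [cycBs]; exact hchord.symm, memsupB (q - k) (by omega),
              memsupB m le_rfl⟩
        · -- chord between the two sides
          rw [cycA p (by omega)] at hchord
          exact hsep _ (memA p hp1 (by omega)) _ (memB (q - k) hq1 (by omega)) hchord
  -- build the cycle map
  set f : ZMod N → V := fun i => cyc i.val with hf
  have finj : Function.Injective f := by
    intro i j hij
    by_contra hne
    have hv : i.val ≠ j.val := fun h => hne (ZMod.val_injective N h)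
    have inj0 : ∀ p q, p < q → q < N → cyc p = cyc q → False := by
      intro p q hpq hqN heq
      rcases le_or_gt q k with hq | hq
      · rw [cycA p (by omega), cycA q hq] at heq
        have := injA p q (by omega) hq heq
        omega
      · have hq1 : 1 ≤ q - k := by omega
        have hq2 : q - k ≤ m - 1 := by omega
        rw [cycB q (by omega)] at heq
        rcases le_or_gt k p with hp | hp
        · rw [cycB p hp] at heq
          have := injB (p - k) (q - k) (by omega) (by omega) heq
          omega
        · rcases Nat.eq_zero_or_pos p with rfl | hp1
          · rw [cyc0] at heq
            exact hsB (heq ▸ memB (q - k) hq1 (by omega))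
          · rw [cycA p (by omega)] at heq
            exact hdisj _ (heq ▸ memA p hp1 (by omega)) (memB (q - k) hq1 (by omega))
    rcases lt_trichotomy i.val j.val with h | h | h
    · exact inj0 _ _ h (ZMod.val_lt j) hij
    · exact hv h
    · exact inj0 _ _ h (ZMod.val_lt i) hij.symm
  have hadj' : ∀ i : ZMod N, G.Adj (f i) (f (i + 1)) := by
    intro i
    have hval : (i + 1).val = (i.val + 1) % N := by
      rw [ZMod.val_add, ZMod.val_one]
    have hiN : i.val < N := ZMod.val_lt i
    rcases Nat.lt_or_ge (i.val + 1) N with h | h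
    · have hval2 : (i + 1).val = i.val + 1 := by rw [hval, Nat.mod_eq_of_lt h]
      show G.Adj (cyc i.val) (cyc (i + 1).val)
      rw [hval2]
      rcases Nat.lt_or_ge i.val k with hp | hp
      · rw [cycA i.val (by omega), cycA (i.val + 1) (by omega)]
        exact (PA.adj_getVert_succ hp).1
      · rw [cycB i.val hp, cycB (i.val + 1) (by omega)]
        have h2 : i.val - k < m := by omega
        have := (PB.adj_getVert_succ h2).1
        have heq : i.val + 1 - k = (i.val - k) + 1 := by omega
        rwa [heq]
    · have hNeq : i.val = N - 1 := by omega
      have hval2 : (i + 1).val = 0 := by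
        rw [hval, hNeq]
        have : N - 1 + 1 = N := by omega
        rw [this, Nat.mod_self]
      show G.Adj (cyc i.val) (cyc (i + 1).val)
      rw [hval2, cyc0, hNeq, cycB (N - 1) (by omega)]
      have heq : N - 1 - k = m - 1 := by omega
      rw [heq]
      have := (PB.adj_getVert_succ (by omega : m - 1 < m)).1
      have heq2 : m - 1 + 1 = m := by omega
      rw [heq2, cycBs] at this
      exact this
  obtain ⟨i, j, h1, h2, h3, h4⟩ := hG N (by omega) f finj hadj'
  -- translate ZMod conditions and conclude via `core`
  have t2 : j.val ≠ (i.val + 1) % N := by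
    intro hh
    apply h2
    apply ZMod.val_injective
    rw [ZMod.val_add, ZMod.val_one, hh]
  have t3 : i.val ≠ (j.val + 1) % N := by
    intro hh
    apply h3
    apply ZMod.val_injective
    rw [ZMod.val_add, ZMod.val_one, hh]
  have hv : i.val ≠ j.val := fun h => h1 (ZMod.val_injective N h)
  have hiN : i.val < N := ZMod.val_lt i
  have hjN : j.val < N := ZMod.val_lt j
  rcases lt_or_gt_of_ne hv with h | h
  · -- i.val < j.val
    have hgap : i.val + 2 ≤ j.val := by
      have : (i.val + 1) % N = i.val + 1 := Nat.mod_eq_of_lt (by omega)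
      rw [this] at t2
      omega
    refine core i.val j.val hgap hjN ?_ h4
    intro hj
    by_contra hp
    apply t3
    have : i.val = 0 := by omega
    rw [this, hj]
    have : N - 1 + 1 = N := by omega
    rw [this, Nat.mod_self]
  · -- j.val < i.val
    have hgap : j.val + 2 ≤ i.val := by
      have : (j.val + 1) % N = j.val + 1 := Nat.mod_eq_of_lt (by omega)
      rw [this] at t3
      omega
    refine core j.val i.val hgap hiN ?_ h4.symm
    intro hi
    by_contra hp
    apply t2
    have : j.val = 0 := by omega
    rw [this, hi]
    have : N - 1 + 1 = N := by omega
    rw [this, Nat.mod_self]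

end AglerAux

namespace AglerAux

variable {V : Type*} [DecidableEq V]

/-- A vertex that is simplicial within the vertex set `W`. -/
def SimpVert (G : SimpleGraph V) (W : Finset V) (v : V) : Prop :=
  v ∈ W ∧ ∀ x ∈ W, ∀ y ∈ W, G.Adj v x → G.Adj v y → x ≠ y → G.Adj x y

lemma sep_exists {G : SimpleGraph V} {W : Finset V} {a b : V}
    (hab : a ≠ b) (hnadj : ¬ G.Adj a b) :
    ¬ (Gr G ↑(W \ (W \ ({a, b} : Finset V)))).Reachable a b := by
  apply not_reachable_of_no_nbr _ hab
  rintro y ⟨hGadj, _, hy⟩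
  simp only [Finset.coe_sdiff, Set.mem_diff, Finset.mem_coe, Finset.mem_sdiff] at hy
  have hy2 : y ∈ ({a, b} : Finset V) := by
    rcases hy with ⟨hyW, hnot⟩
    by_contra hc
    exact hnot ⟨hyW, hc⟩
  rcases Finset.mem_insert.1 hy2 with rfl | hy3
  · exact G.ne_of_adj hGadj rfl
  · rw [Finset.mem_singleton] at hy3
    subst hy3
    exact hnadj hGadj

lemma sep_nbr {G : SimpleGraph V} {W T : Finset V} {a b s : V} (hs : s ∈ T)
    (hsa : s ≠ a)
    (hsep : ¬ (Gr G ↑(W \ T)).Reachable a b)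
    (hre : (Gr G ↑(W \ T.erase s)).Reachable a b)
    (haW : a ∈ W) (haT : a ∉ T) :
    ∃ y, G.Adj s y ∧ (Gr G ↑(W \ T)).Reachable a y := by
  classical
  obtain ⟨w⟩ := hre
  have ha' : a ∈ (↑(W \ T.erase s) : Set V) := by
    simp only [Finset.coe_sdiff, Set.mem_diff, Finset.mem_coe]
    exact ⟨haW, fun h => haT (Finset.mem_of_mem_erase h)⟩
  have hsupmem : ∀ x ∈ w.support, x ∈ (↑(W \ T.erase s) : Set V) :=
    support_mem w ha'
  have conv : ∀ x, x ∈ (↑(W \ T.erase s) : Set V) → x ≠ s → x ∈ (↑(W \ T) : Set V) := by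
    intro x hx hxs
    simp only [Finset.coe_sdiff, Set.mem_diff, Finset.mem_coe] at hx ⊢
    refine ⟨hx.1, fun hxT => hx.2 (Finset.mem_erase.2 ⟨hxs, hxT⟩)⟩
  have hssup : s ∈ w.support := by
    by_contra hns
    exact hsep (reachable_of_subset w
      (fun x hx => conv x (hsupmem x hx) (fun h => hns (h ▸ hx))))
  set w1 := w.takeUntil s hssup with hw1
  have hcount : List.count s w1.support = 1 :=
    SimpleGraph.Walk.count_support_takeUntil_eq_one w hssup
  have hsub1 : ∀ x ∈ w1.support, x ∈ (↑(W \ T.erase s) : Set V) := by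
    intro x hx
    exact hsupmem x (SimpleGraph.Walk.support_takeUntil_subset w hssup hx)
  have hcount' : List.count s w1.reverse.support = 1 := by
    rw [SimpleGraph.Walk.support_reverse, List.count_reverse]
    exact hcount
  have hsub1' : ∀ x ∈ w1.reverse.support, x ∈ (↑(W \ T.erase s) : Set V) := by
    intro x hx
    rw [SimpleGraph.Walk.support_reverse, List.mem_reverse] at hx
    exact hsub1 x hx
  rcases hw : w1.reverse with _ | ⟨hadj, w2⟩
  · exact absurd rfl hsa
  · rw [hw] at hcount' hsub1'
    rw [SimpleGraph.Walk.support_cons, List.count_cons_self] at hcount'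
    have hs_not : s ∉ w2.support := by
      rw [← List.count_eq_zero]
      omega
    refine ⟨_, hadj.1, ?_⟩
    have : (Gr G ↑(W \ T)).Reachable _ a := reachable_of_subset w2 (by
      intro x hx
      refine conv x (hsub1' x (by
        rw [SimpleGraph.Walk.support_cons]
        exact List.mem_cons_of_mem _ hx)) (fun h => hs_not (h ▸ hx)))
    exact this.symm

variable [Fintype V]

lemma dirac2 {G : SimpleGraph V} (hG : IsChordal G) :
    ∀ k (W : Finset V), W.card ≤ k → W.Nonempty →
      (∀ x ∈ W, SimpVert G W x) ∨
      ∃ u v, u ∈ W ∧ v ∈ W ∧ u ≠ v ∧ ¬ G.Adj u v ∧ SimpVert G W u ∧ SimpVert G W v := by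
  intro k
  induction k with
  | zero =>
    intro W hcard hne
    exfalso
    rw [Nat.le_zero, Finset.card_eq_zero] at hcard
    exact Finset.not_nonempty_empty (hcard ▸ hne)
  | succ k ih =>
    intro W hcard hne
    classical
    by_cases hcl : ∀ x ∈ W, ∀ y ∈ W, x ≠ y → G.Adj x y
    · exact Or.inl (fun v hv => ⟨hv, fun x hx y hy _ _ hxy => hcl x hx y hy hxy⟩)
    · push_neg at hcl
      obtain ⟨a, ha, b, hb, hab, hnadj⟩ := hcl
      -- minimal separator
      set Q : ℕ → Prop := fun c => ∃ T : Finset V,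
        (T ⊆ W \ ({a, b} : Finset V) ∧ ¬ (Gr G ↑(W \ T)).Reachable a b) ∧ T.card = c
        with hQdef
      have hQ : ∃ c, Q c :=
        ⟨_, W \ ({a, b} : Finset V), ⟨le_refl _, sep_exists hab hnadj⟩, rfl⟩
      obtain ⟨T, ⟨hT, hsepT⟩, hTcard⟩ := Nat.find_spec hQ
      have hmin : ∀ T' : Finset V, T' ⊆ W \ ({a, b} : Finset V) →
          ¬ (Gr G ↑(W \ T')).Reachable a b → T.card ≤ T'.card := by
        intro T' h1 h2
        rw [hTcard]
        exact Nat.find_min' hQ ⟨T', ⟨h1, h2⟩, rfl⟩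
      have haT : a ∉ T := fun h => by
        have := hT h
        rw [Finset.mem_sdiff] at this
        exact this.2 (Finset.mem_insert_self a _)
      have hbT : b ∉ T := fun h => by
        have := hT h
        rw [Finset.mem_sdiff] at this
        exact this.2 (by simp)
      have ha' : a ∈ (↑(W \ T) : Set V) := by
        simp only [Finset.coe_sdiff, Set.mem_diff, Finset.mem_coe]
        exact ⟨ha, haT⟩
      have hb' : b ∈ (↑(W \ T) : Set V) := by
        simp only [Finset.coe_sdiff, Set.mem_diff, Finset.mem_coe]
        exact ⟨hb, hbT⟩
      set GT := Gr G ↑(W \ T) with hGT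
      set A : Set V := {x | GT.Reachable a x} with hA
      set B : Set V := {x | GT.Reachable b x} with hB
      have hAW : ∀ x ∈ A, x ∈ (↑(W \ T) : Set V) := fun x hx => reach_mem hx ha'
      have hBW : ∀ x ∈ B, x ∈ (↑(W \ T) : Set V) := fun x hx => reach_mem hx hb'
      have hdisjAB : ∀ x, x ∈ A → x ∈ B → False :=
        fun x h1 h2 => hsepT (h1.trans h2.symm)
      have hclosA : ∀ x ∈ A, ∀ y, GT.Adj x y → y ∈ A :=
        fun x hx y hadj => hx.trans hadj.reachable
      have hclosB : ∀ x ∈ B, ∀ y, GT.Adj x y → y ∈ B :=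
        fun x hx y hadj => hx.trans hadj.reachable
      -- every separator vertex has neighbours in both components
      have hreach_er : ∀ s ∈ T, (Gr G ↑(W \ T.erase s)).Reachable a b := by
        intro s hs
        by_contra hno
        have h1 : T.erase s ⊆ W \ ({a, b} : Finset V) :=
          (Finset.erase_subset s T).trans hT
        have := hmin _ h1 hno
        have h2 : (T.erase s).card < T.card := Finset.card_erase_lt_of_mem hs
        omega
      have hnbrA : ∀ s ∈ T, ∃ y, G.Adj s y ∧ y ∈ A := by
        intro s hs
        obtain ⟨y, h1, h2⟩ := sep_nbr hs (fun h : s = a => haT (by rwa [h] at hs)) hsepT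
          (hreach_er s hs) ha haT
        exact ⟨y, h1, h2⟩
      have hnbrB : ∀ s ∈ T, ∃ y, G.Adj s y ∧ y ∈ B := by
        intro s hs
        obtain ⟨y, h1, h2⟩ := sep_nbr hs (fun h : s = b => hbT (by rwa [h] at hs))
          (fun h => hsepT h.symm) (hreach_er s hs).symm hb hbT
        exact ⟨y, h1, h2⟩
      have hsepAB : ∀ x ∈ A, ∀ y ∈ B, ¬ G.Adj x y := by
        intro x hx y hy hxy
        have : GT.Adj x y := ⟨hxy, hAW x hx, hBW y hy⟩
        exact hdisjAB y (hclosA x hx y this) hy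
      -- T is a clique
      have hTclq : ∀ s ∈ T, ∀ t ∈ T, s ≠ t → G.Adj s t := by
        intro s hs t ht hst
        by_contra hnst
        obtain ⟨ys, hys1, hys2⟩ := hnbrA s hs
        obtain ⟨yt, hyt1, hyt2⟩ := hnbrA t ht
        obtain ⟨zs, hzs1, hzs2⟩ := hnbrB s hs
        obtain ⟨zt, hzt1, hzt2⟩ := hnbrB t ht
        have hsWT : s ∉ (↑(W \ T) : Set V) := by
          simp only [Finset.coe_sdiff, Set.mem_diff, Finset.mem_coe]
          exact fun h => h.2 hs
        have htWT : t ∉ (↑(W \ T) : Set V) := by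
          simp only [Finset.coe_sdiff, Set.mem_diff, Finset.mem_coe]
          exact fun h => h.2 ht
        have hrA : (Gr G (A ∪ {s, t})).Reachable s t := by
          have hr1 : GT.Reachable ys yt := hys2.symm.trans hyt2
          obtain ⟨w⟩ := hr1
          have hsupA : ∀ x ∈ w.support, x ∈ A :=
            fun x hx => hys2.trans (reach_support w x hx)
          have hmid : (Gr G (A ∪ {s, t})).Reachable ys yt :=
            reachable_of_subset w (fun x hx => Or.inl (hsupA x hx))
          have e1 : (Gr G (A ∪ {s, t})).Adj s ys :=
            ⟨hys1, Or.inr (by simp), Or.inl hys2⟩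
          have e2 : (Gr G (A ∪ {s, t})).Adj yt t :=
            ⟨hyt1.symm, Or.inl hyt2, Or.inr (by simp)⟩
          exact (e1.reachable.trans hmid).trans e2.reachable
        have hrB : (Gr G (B ∪ {s, t})).Reachable s t := by
          have hr1 : GT.Reachable zs zt := hzs2.symm.trans hzt2
          obtain ⟨w⟩ := hr1
          have hsupB : ∀ x ∈ w.support, x ∈ B :=
            fun x hx => hzs2.trans (reach_support w x hx)
          have hmid : (Gr G (B ∪ {s, t})).Reachable zs zt :=
            reachable_of_subset w (fun x hx => Or.inl (hsupB x hx))
          have e1 : (Gr G (B ∪ {s, t})).Adj s zs :=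
            ⟨hzs1, Or.inr (by simp), Or.inl hzs2⟩
          have e2 : (Gr G (B ∪ {s, t})).Adj zt t :=
            ⟨hzt1.symm, Or.inl hzt2, Or.inr (by simp)⟩
          exact (e1.reachable.trans hmid).trans e2.reachable
        exact no_sep_config hG hdisjAB (fun h => hsWT (hAW s h))
          (fun h => hsWT (hBW s h)) (fun h => htWT (hAW t h))
          (fun h => htWT (hBW t h)) hst hnst hsepAB hrA hrB
      -- find a simplicial vertex inside the `a`-side
      have side : ∀ (c : V), c ∈ W → c ∉ T →
          (∀ x, x ∈ ({x | GT.Reachable c x} : Set V) → x ∈ (↑(W \ T) : Set V)) →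
          ∃ u, u ∈ ({x | GT.Reachable c x} : Set V) ∧ SimpVert G W u := by
        intro c hc hcT hCW
        set Cc : Set V := {x | GT.Reachable c x} with hCc
        have hclosC : ∀ x ∈ Cc, ∀ y, GT.Adj x y → y ∈ Cc :=
          fun x hx y hadj => hx.trans hadj.reachable
        set Cfin : Finset V := (W \ T).filter (fun x => x ∈ Cc) with hCfin
        have hcC : c ∈ Cfin := by
          rw [hCfin, Finset.mem_filter, Finset.mem_sdiff]
          exact ⟨⟨hc, hcT⟩, SimpleGraph.Reachable.refl _⟩
        set W1 : Finset V := Cfin ∪ T with hW1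
        have hW1W : W1 ⊆ W := by
          intro x hx
          rcases Finset.mem_union.1 hx with h | h
          · rw [hCfin, Finset.mem_filter, Finset.mem_sdiff] at h
            exact h.1.1
          · exact (Finset.mem_sdiff.1 (hT h)).1
        have hbW1 : b ∉ W1 ∨ a ∉ W1 := by
          by_cases hcb : GT.Reachable c b
          · right
            intro haW1
            rcases Finset.mem_union.1 haW1 with h | h
            · rw [hCfin, Finset.mem_filter] at h
              exact hsepT ((h.2.symm.trans hcb))
            · exact haT h
          · left
            intro hbW1
            rcases Finset.mem_union.1 hbW1 with h | h
            · rw [hCfin, Finset.mem_filter] at h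
              exact hcb h.2
            · exact hbT h
        have hssub : W1 ⊂ W := by
          refine Finset.ssubset_iff_subset_ne.2 ⟨hW1W, ?_⟩
          intro heq
          rcases hbW1 with h | h
          · exact h (heq ▸ hb)
          · exact h (heq ▸ ha)
        have hcard1 : W1.card ≤ k := by
          have := Finset.card_lt_card hssub
          omega
        -- membership closure: neighbours (in W) of a vertex of Cfin stay in W1
        have hkey : ∀ v ∈ Cfin, ∀ y ∈ W, G.Adj v y → y ∈ W1 := by
          intro v hv y hy hadj
          by_cases hyT : y ∈ T
          · exact Finset.mem_union_right _ hyT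
          · rw [hCfin, Finset.mem_filter, Finset.mem_sdiff] at hv
            have hyWT : y ∈ (↑(W \ T) : Set V) := by
              simp only [Finset.coe_sdiff, Set.mem_diff, Finset.mem_coe]
              exact ⟨hy, hyT⟩
            have hvWT : v ∈ (↑(W \ T) : Set V) := by
              simp only [Finset.coe_sdiff, Set.mem_diff, Finset.mem_coe]
              exact ⟨hv.1.1, hv.1.2⟩
            have : y ∈ Cc := hclosC v hv.2 y ⟨hadj, hvWT, hyWT⟩
            apply Finset.mem_union_left
            rw [hCfin, Finset.mem_filter, Finset.mem_sdiff]
            exact ⟨⟨hy, hyT⟩, this⟩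
        have hlift : ∀ v ∈ Cfin, SimpVert G W1 v → SimpVert G W v := by
          rintro v hv ⟨hvW1, hsimp⟩
          refine ⟨hW1W hvW1, ?_⟩
          intro x hx y hy h1 h2 hxy
          exact hsimp x (hkey v hv x hx h1) y (hkey v hv y hy h2) h1 h2 hxy
        have hmemC : ∀ v ∈ Cfin, v ∈ Cc := by
          intro v hv
          rw [hCfin, Finset.mem_filter] at hv
          exact hv.2
        rcases ih W1 hcard1 ⟨c, Finset.mem_union_left _ hcC⟩ with hall |
          ⟨u, v, huW1, hvW1, huv, hnuv, hsu, hsv⟩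
        · exact ⟨c, SimpleGraph.Reachable.refl _,
            hlift c hcC (hall c (Finset.mem_union_left _ hcC))⟩
        · have : u ∈ Cfin ∨ v ∈ Cfin := by
            by_contra hcon
            push_neg at hcon
            rcases Finset.mem_union.1 huW1 with h1 | h1
            · exact hcon.1 h1
            · rcases Finset.mem_union.1 hvW1 with h2 | h2
              · exact hcon.2 h2
              · exact hnuv (hTclq u h1 v h2 huv)
          rcases this with h | h
          · exact ⟨u, hmemC u h, hlift u h hsu⟩
          · exact ⟨v, hmemC v h, hlift v h hsv⟩
      obtain ⟨uA, huA, hsA⟩ := side a ha haT hAW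
      obtain ⟨uB, huB, hsB⟩ := side b hb hbT hBW
      refine Or.inr ⟨uA, uB, hsA.1, hsB.1, ?_, ?_, hsA, hsB⟩
      · intro h
        exact hdisjAB uA huA (h ▸ huB)
      · exact hsepAB uA huA uB huB

/-- Dirac: every nonempty vertex set of a chordal graph contains a simplicial vertex. -/
lemma dirac {G : SimpleGraph V} (hG : IsChordal G) (W : Finset V) (hW : W.Nonempty) :
    ∃ v, SimpVert G W v := by
  rcases dirac2 hG W.card W le_rfl hW with h | ⟨u, _, _, _, _, _, hu, _⟩
  · obtain ⟨x, hx⟩ := hW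
    exact ⟨x, h x hx⟩
  · exact ⟨u, hu⟩

end AglerAux


namespace AglerAux2

variable {N : ℕ}

lemma psd_quad {M : Matrix (Fin N) (Fin N) ℝ} (hM : M.PosSemidef)
    (x : Fin N → ℝ) : 0 ≤ x ⬝ᵥ (M *ᵥ x) := by
  have := hM.dotProduct_mulVec_nonneg x
  rwa [star_trivial] at this

lemma expand_two (M : Matrix (Fin N) (Fin N) ℝ) (i j : Fin N) (t c : ℝ) :
    (Pi.single i t + Pi.single j c) ⬝ᵥ (M *ᵥ (Pi.single i t + Pi.single j c)) =
      t * (M i i * t) + t * (M i j * c) + (c * (M j i * t) + c * (M j j * c)) := by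
  rw [mulVec_add, dotProduct_add, add_dotProduct, add_dotProduct,
    mulVec_single, mulVec_single, single_dotProduct, single_dotProduct,
    single_dotProduct, single_dotProduct]
  simp only [Pi.smul_apply, Matrix.col_apply, op_smul_eq_mul]
  ring

lemma psd_diag_nonneg {M : Matrix (Fin N) (Fin N) ℝ} (hM : M.PosSemidef)
    (i : Fin N) : 0 ≤ M i i := by
  have := psd_quad hM (Pi.single i 1)
  simpa [mulVec_single, single_dotProduct] using this

lemma psd_diag_zero {M : Matrix (Fin N) (Fin N) ℝ} (hM : M.PosSemidef)
    {i j : Fin N} (h : M i i = 0) : M i j = 0 := by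
  by_cases hij : i = j
  · rw [← hij]; exact h
  · by_contra hc
    have hji : M j i = M i j := by
      have := hM.1
      have h2 : Mᴴ i j = M i j := by rw [this]
      rw [conjTranspose_apply, star_trivial] at h2
      exact h2
    have hq := psd_quad hM (Pi.single i (-(M j j + 1) / (2 * M i j)) + Pi.single j 1)
    rw [expand_two, h, hji] at hq
    set t := -(M j j + 1) / (2 * M i j) with ht
    have h2 : t * (M i j * 1) + (1 * (M i j * t) + 1 * (M j j * 1)) = -1 := by
      rw [ht]
      field_simp
      ring
    have h3 : t * (0 * t) = 0 := by ring
    rw [h3, zero_add, h2] at hq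
    linarith

section Schur

variable {S : Matrix (Fin N) (Fin N) ℝ} {v : Fin N}

/-- The rank-one Schur piece. -/
noncomputable def schurR (S : Matrix (Fin N) (Fin N) ℝ) (v : Fin N) :
    Matrix (Fin N) (Fin N) ℝ :=
  fun i j => S i v * S j v / S v v

lemma schurR_herm (S : Matrix (Fin N) (Fin N) ℝ) (v : Fin N) :
    (schurR S v).IsHermitian := by
  unfold Matrix.IsHermitian
  ext i j
  rw [conjTranspose_apply, star_trivial]
  unfold schurR
  ring

lemma schurR_quad (x : Fin N → ℝ) :
    x ⬝ᵥ (schurR S v *ᵥ x) =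
      (∑ j, S j v * x j) * (∑ j, S j v * x j) / S v v := by
  simp only [dotProduct, mulVec, schurR]
  have h1 : ∀ i ∈ (Finset.univ : Finset (Fin N)),
      x i * (∑ j, S i v * S j v / S v v * x j) =
        S i v * x i * (∑ j, S j v * x j) / S v v := by
    intro i _
    rw [Finset.mul_sum, Finset.mul_sum, Finset.sum_div]
    apply Finset.sum_congr rfl
    intro j _
    ring
  rw [Finset.sum_congr rfl h1, ← Finset.sum_div, ← Finset.sum_mul]

lemma schurR_psd (hS : S.PosSemidef) (ha : 0 < S v v) : (schurR S v).PosSemidef := by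
  refine Matrix.PosSemidef.of_dotProduct_mulVec_nonneg (schurR_herm S v) fun x => ?_
  rw [star_trivial, schurR_quad]
  exact div_nonneg (mul_self_nonneg _) ha.le

lemma schur_sub_psd (hS : S.PosSemidef) (ha : 0 < S v v) :
    (S - schurR S v).PosSemidef := by
  refine Matrix.PosSemidef.of_dotProduct_mulVec_nonneg (hS.1.sub (schurR_herm S v)) fun x => ?_
  rw [star_trivial]
  have hsym : ∀ i, S v i = S i v := by
    intro i
    have h2 : Sᴴ v i = S v i := by rw [hS.1]
    rw [conjTranspose_apply, star_trivial] at h2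
    exact h2.symm
  have ha' : S v v ≠ 0 := ha.ne'
  set c : ℝ := ∑ j, S j v * x j with hc
  set y : Fin N → ℝ := x + Pi.single v (-(c / S v v)) with hy
  have key : x ⬝ᵥ ((S - schurR S v) *ᵥ x) = y ⬝ᵥ (S *ᵥ y) := by
    rw [hy, mulVec_add, dotProduct_add, add_dotProduct, add_dotProduct,
      mulVec_single, single_dotProduct, single_dotProduct, sub_mulVec,
      dotProduct_sub, schurR_quad, ← hc]
    have e1 : (x ⬝ᵥ fun i => S i v * -(c / S v v)) = c * -(c / S v v) := by
      simp only [dotProduct]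
      have h1 : ∀ i ∈ (Finset.univ : Finset (Fin N)),
          x i * (S i v * -(c / S v v)) = (S i v * x i) * -(c / S v v) := by
        intro i _; ring
      rw [Finset.sum_congr rfl h1, ← Finset.sum_mul, ← hc]
    have e2 : (S *ᵥ x) v = c := by
      simp only [mulVec, dotProduct, hc]
      apply Finset.sum_congr rfl
      intro j _
      rw [hsym j]
    have e0 : (MulOpposite.op (-(c / S v v)) • S.col v) = fun i => S i v * -(c / S v v) := by
      ext i
      simp only [Pi.smul_apply, Matrix.col_apply, op_smul_eq_mul]
    rw [e0, e1, e2]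
    beta_reduce
    field_simp
    ring
  rw [key]
  exact psd_quad hS y

end Schur

end AglerAux2

section Assembly

open AglerAux AglerAux2

variable {nn p : ℕ}

lemma clique_extend {G : SimpleGraph (Fin nn)} {C : Fin p → Finset (Fin nn)}
    (hcov : ∀ D, IsMaxClique G D → ∃ ℓ, C ℓ = D)
    {K : Finset (Fin nn)} (hK : G.IsClique (↑K : Set (Fin nn))) : ∃ ℓ, K ⊆ C ℓ := by
  classical
  set F := Finset.univ.powerset.filter
    (fun D => K ⊆ D ∧ G.IsClique (↑D : Set (Fin nn))) with hF
  have hKF : K ∈ F := by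
    rw [hF, Finset.mem_filter]
    exact ⟨Finset.mem_powerset.2 (Finset.subset_univ _), le_refl _, hK⟩
  obtain ⟨D, hD, hDmax⟩ := F.exists_max_image Finset.card ⟨K, hKF⟩
  rw [hF, Finset.mem_filter] at hD
  have hmax : IsMaxClique G D := by
    refine ⟨hD.2.2, fun D' hclD' hsub => ?_⟩
    have hD'F : D' ∈ F := by
      rw [hF, Finset.mem_filter]
      exact ⟨Finset.mem_powerset.2 (Finset.subset_univ _), hD.2.1.trans hsub, hclD'⟩
    exact Finset.eq_of_subset_of_card_le hsub (hDmax D' hD'F)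
  obtain ⟨ℓ, hℓ⟩ := hcov D hmax
  exact ⟨ℓ, hℓ ▸ hD.2.1⟩

/-- The key decomposition of a PSD matrix supported on a chordal graph. -/
lemma decomp {G : SimpleGraph (Fin nn)} (hG : IsChordal G)
    {C : Fin p → Finset (Fin nn)}
    (hcov : ∀ D, IsMaxClique G D → ∃ ℓ, C ℓ = D) :
    ∀ (k : ℕ) (S : Matrix (Fin nn) (Fin nn) ℝ), S.PosSemidef →
      (∀ i j, i ≠ j → ¬ G.Adj i j → S i j = 0) →
      (Finset.univ.filter (fun i => S i i ≠ 0)).card ≤ k →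
      ∃ f : Fin p → Matrix (Fin nn) (Fin nn) ℝ,
        (∀ ℓ, (f ℓ).PosSemidef) ∧
        (∀ ℓ i j, f ℓ i j ≠ 0 → i ∈ C ℓ ∧ j ∈ C ℓ) ∧
        S = ∑ ℓ, f ℓ := by
  classical
  intro k
  induction k with
  | zero =>
    intro S hpsd hsupp hcard
    refine ⟨fun _ => 0, fun _ => Matrix.PosSemidef.zero, fun ℓ i j h => absurd rfl h, ?_⟩
    have hS0 : S = 0 := by
      ext i j
      have hdiag : S i i = 0 := by
        by_contra hc
        have : i ∈ Finset.univ.filter (fun i => S i i ≠ 0) := by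
          rw [Finset.mem_filter]; exact ⟨Finset.mem_univ _, hc⟩
        rw [Nat.le_zero, Finset.card_eq_zero] at hcard
        rw [hcard] at this
        exact absurd this (Finset.notMem_empty _)
      rw [Matrix.zero_apply]
      exact psd_diag_zero hpsd hdiag
    rw [hS0, Finset.sum_const_zero]
  | succ k ih =>
    intro S hpsd hsupp hcard
    set W := Finset.univ.filter (fun i => S i i ≠ 0) with hW
    rcases Finset.eq_empty_or_nonempty W with hWe | hWne
    · refine ⟨fun _ => 0, fun _ => Matrix.PosSemidef.zero, fun ℓ i j h => absurd rfl h, ?_⟩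
      have hS0 : S = 0 := by
        ext i j
        have hdiag : S i i = 0 := by
          by_contra hc
          have : i ∈ W := by rw [hW, Finset.mem_filter]; exact ⟨Finset.mem_univ _, hc⟩
          rw [hWe] at this
          exact absurd this (Finset.notMem_empty _)
        rw [Matrix.zero_apply]
        exact psd_diag_zero hpsd hdiag
      rw [hS0, Finset.sum_const_zero]
    · obtain ⟨v, hvW, hsimp⟩ := dirac hG W hWne
      have hvW' : S v v ≠ 0 := (Finset.mem_filter.1 hvW).2
      have ha : 0 < S v v := lt_of_le_of_ne (psd_diag_nonneg hpsd v) (Ne.symm hvW')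
      set K : Finset (Fin nn) := insert v (W.filter (fun y => G.Adj v y)) with hK
      have hKclq : G.IsClique (↑K : Set (Fin nn)) := by
        rw [SimpleGraph.isClique_iff]
        intro x hx y hy hxy
        simp only [hK, Finset.coe_insert, Set.mem_insert_iff, Finset.coe_filter,
          Set.mem_setOf_eq, Finset.mem_coe, Finset.mem_filter] at hx hy
        rcases hx with rfl | ⟨hxW, hxadj⟩
        · rcases hy with rfl | ⟨hyW, hyadj⟩
          · exact absurd rfl hxy
          · exact hyadj
        · rcases hy with rfl | ⟨hyW, hyadj⟩
          · exact hxadj.symm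
          · exact hsimp x hxW y hyW hxadj hyadj hxy
      obtain ⟨ℓ₀, hℓ₀⟩ := clique_extend hcov hKclq
      have hmemK : ∀ i, S i v ≠ 0 → i ∈ K := by
        intro i hi
        by_cases hiv : i = v
        · rw [hK, hiv]; exact Finset.mem_insert_self _ _
        · have hdiag : S i i ≠ 0 := by
            intro h
            exact hi (psd_diag_zero hpsd h)
          have hadj : G.Adj i v := by
            by_contra hna
            exact hi (hsupp i v hiv hna)
          rw [hK]
          apply Finset.mem_insert_of_mem
          rw [Finset.mem_filter]
          exact ⟨by rw [hW, Finset.mem_filter]; exact ⟨Finset.mem_univ _, hdiag⟩, hadj.symm⟩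
      set R := schurR S v with hR
      have hRsupp : ∀ i j, R i j ≠ 0 → i ∈ K ∧ j ∈ K := by
        intro i j hij
        rw [hR] at hij
        unfold schurR at hij
        constructor
        · apply hmemK
          intro h
          rw [h] at hij
          simp at hij
        · apply hmemK
          intro h
          rw [h] at hij
          simp at hij
      have hS' := schur_sub_psd hpsd ha
      have hS'supp : ∀ i j, i ≠ j → ¬ G.Adj i j → (S - R) i j = 0 := by
        intro i j hij hnadj
        have h1 : S i j = 0 := hsupp i j hij hnadj
        have h2 : R i j = 0 := by
          by_contra hc
          obtain ⟨hiK, hjK⟩ := hRsupp i j hc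
          exact hnadj (hKclq hiK hjK hij)
        rw [Matrix.sub_apply, h1, h2, sub_zero]
      have hdiagz : ∀ i, i ∉ W.erase v → (S - R) i i = 0 := by
        intro i hi
        rw [Finset.mem_erase] at hi
        push_neg at hi
        by_cases hiv : i = v
        · subst hiv
          rw [Matrix.sub_apply, hR]
          unfold schurR
          field_simp
          ring
        · have hiW : i ∉ W := hi hiv
          have hdiag : S i i = 0 := by
            by_contra hc
            exact hiW (by rw [hW, Finset.mem_filter]; exact ⟨Finset.mem_univ _, hc⟩)
          have hSiv : S i v = 0 := psd_diag_zero hpsd hdiag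
          rw [Matrix.sub_apply, hdiag, hR]
          unfold schurR
          rw [hSiv]
          ring
      have hcard' : (Finset.univ.filter (fun i => (S - R) i i ≠ 0)).card ≤ k := by
        have hsub : Finset.univ.filter (fun i => (S - R) i i ≠ 0) ⊆ W.erase v := by
          intro i hi
          rw [Finset.mem_filter] at hi
          by_contra hc
          exact hi.2 (hdiagz i hc)
        have h1 := Finset.card_le_card hsub
        have h2 : (W.erase v).card = W.card - 1 := Finset.card_erase_of_mem hvW
        have h3 : 1 ≤ W.card := Finset.card_pos.2 hWne
        omega
      obtain ⟨f', hf1, hf2, hf3⟩ := ih (S - R) hS' hS'supp hcard'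
      refine ⟨fun ℓ => f' ℓ + if ℓ = ℓ₀ then R else 0, ?_, ?_, ?_⟩
      · intro ℓ
        show (f' ℓ + if ℓ = ℓ₀ then R else 0).PosSemidef
        by_cases h : ℓ = ℓ₀
        · rw [if_pos h]
          exact (hf1 ℓ).add (schurR_psd hpsd ha)
        · rw [if_neg h, add_zero]
          exact hf1 ℓ
      · intro ℓ i j hne
        have hne' : (f' ℓ + if ℓ = ℓ₀ then R else 0) i j ≠ 0 := hne
        by_cases h1 : f' ℓ i j = 0
        · by_cases h : ℓ = ℓ₀
          · rw [if_pos h] at hne'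
            rw [Matrix.add_apply, h1, zero_add] at hne'
            obtain ⟨hiK, hjK⟩ := hRsupp i j hne'
            subst h
            exact ⟨hℓ₀ hiK, hℓ₀ hjK⟩
          · rw [if_neg h] at hne'
            rw [Matrix.add_apply, h1, zero_add, Matrix.zero_apply] at hne'
            exact absurd rfl hne'
        · exact hf2 ℓ i j h1
      · have hsum : ∑ ℓ, (f' ℓ + if ℓ = ℓ₀ then R else 0) =
            (∑ ℓ, f' ℓ) + ∑ ℓ, (if ℓ = ℓ₀ then R else 0) := Finset.sum_add_distrib
        show S = ∑ ℓ, (f' ℓ + if ℓ = ℓ₀ then R else 0)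
        rw [hsum, ← hf3, Finset.sum_ite_eq' Finset.univ ℓ₀ (fun _ => R),
          if_pos (Finset.mem_univ _), sub_add_cancel]

end Assembly

section Final

open AglerAux AglerAux2

lemma psd_sum {N : ℕ} {ι : Type*} (s : Finset ι) (f : ι → Matrix (Fin N) (Fin N) ℝ)
    (h : ∀ i ∈ s, (f i).PosSemidef) : (∑ i ∈ s, f i).PosSemidef := by
  classical
  induction s using Finset.induction_on with
  | empty => simpa using Matrix.PosSemidef.zero
  | insert _ _ hx ih =>
    rw [Finset.sum_insert hx]
    exact (h _ (Finset.mem_insert_self _ _)).add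
      (ih (fun i hi => h i (Finset.mem_insert_of_mem hi)))

lemma sel_key {nn : ℕ} (Cl : Finset (Fin nn)) (g : Fin nn → ℝ) (i : Fin nn) :
    (∑ a : ↥Cl, (if (↑a : Fin nn) = i then (1 : ℝ) else 0) * g ↑a)
      = if i ∈ Cl then g i else 0 := by
  classical
  by_cases hi : i ∈ Cl
  · rw [if_pos hi]
    rw [Finset.sum_eq_single (⟨i, hi⟩ : ↥Cl)]
    · rw [if_pos rfl, one_mul]
    · intro b _ hb
      rw [if_neg, zero_mul]
      intro hbi
      exact hb (Subtype.ext hbi)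
    · intro h
      exact absurd (Finset.mem_univ _) h
  · rw [if_neg hi]
    apply Finset.sum_eq_zero
    intro a _
    rw [if_neg, zero_mul]
    intro hai
    exact hi (hai ▸ a.2)

lemma sel_key2 {nn : ℕ} (Cl : Finset (Fin nn)) (g : Fin nn → ℝ) (j : Fin nn) :
    (∑ b : ↥Cl, g ↑b * (if (↑b : Fin nn) = j then (1 : ℝ) else 0))
      = if j ∈ Cl then g j else 0 := by
  have h : ∀ b : ↥Cl, g ↑b * (if (↑b : Fin nn) = j then (1 : ℝ) else 0)
      = (if (↑b : Fin nn) = j then (1 : ℝ) else 0) * g ↑b := fun b => mul_comm _ _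
  rw [Finset.sum_congr rfl (fun b _ => h b)]
  exact sel_key Cl g j

lemma sel_apply {nn : ℕ} (Cl : Finset (Fin nn)) (M : Matrix (Fin nn) (Fin nn) ℝ)
    (hM : ∀ i j, M i j ≠ 0 → i ∈ Cl ∧ j ∈ Cl) :
    (selector Cl)ᵀ *
        (M.submatrix (fun a : ↥Cl => (↑a : Fin nn)) (fun a : ↥Cl => (↑a : Fin nn))) *
        selector Cl = M := by
  classical
  ext i j
  simp only [Matrix.mul_apply, Matrix.transpose_apply, Matrix.submatrix_apply, selector]
  have step1 : ∀ b : ↥Cl,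
      (∑ a : ↥Cl, (if (↑a : Fin nn) = i then (1 : ℝ) else 0) * M ↑a ↑b)
        = if i ∈ Cl then M i ↑b else 0 := fun b => sel_key Cl (fun x => M x ↑b) i
  rw [Finset.sum_congr rfl (fun b _ => by rw [step1 b])]
  by_cases hi : i ∈ Cl
  · simp only [if_pos hi]
    rw [sel_key2 Cl (fun x => M i x) j]
    by_cases hj : j ∈ Cl
    · rw [if_pos hj]
    · rw [if_neg hj]
      by_contra hc
      exact hj (hM i j (fun h => hc h.symm)).2
  · simp only [if_neg hi, zero_mul, Finset.sum_const_zero]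
    by_contra hc
    exact hi (hM i j (fun h => hc h.symm)).1

/-- **Agler's theorem.** For a chordal graph `G(V,E)` with maximal cliques
`C 1, …, C p`, a symmetric matrix `S` supported on `E` is positive semidefinite
iff `S = Σ_ℓ T_ℓᵀ S_ℓ T_ℓ` for some PSD matrices `S_ℓ` of dimension `|C_ℓ|`. -/
theorem agler_theorem {n p : ℕ} (G : SimpleGraph (Fin n)) (hG : IsChordal G)
    (C : Fin p → Finset (Fin n))
    (hmax : ∀ ℓ, IsMaxClique G (C ℓ))
    (hcov : ∀ D : Finset (Fin n), IsMaxClique G D → ∃ ℓ, C ℓ = D)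
    (S : Matrix (Fin n) (Fin n) ℝ) (hsymm : S.IsSymm)
    (hsupp : ∀ i j, i ≠ j → ¬ G.Adj i j → S i j = 0) :
    S.PosSemidef ↔
      ∃ Sl : (ℓ : Fin p) → Matrix (C ℓ) (C ℓ) ℝ,
        (∀ ℓ, (Sl ℓ).PosSemidef) ∧
        S = ∑ ℓ, (selector (C ℓ))ᵀ * Sl ℓ * selector (C ℓ) := by
  constructor
  · intro hpsd
    obtain ⟨f, hf1, hf2, hf3⟩ := decomp hG hcov
      (Finset.univ.filter (fun i => S i i ≠ 0)).card S hpsd hsupp le_rfl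
    refine ⟨fun ℓ => (f ℓ).submatrix (fun a : ↥(C ℓ) => (↑a : Fin n))
      (fun a : ↥(C ℓ) => (↑a : Fin n)), fun ℓ => (hf1 ℓ).submatrix _, ?_⟩
    rw [hf3]
    apply Finset.sum_congr rfl
    intro ℓ _
    exact (sel_apply (C ℓ) (f ℓ) (hf2 ℓ)).symm
  · rintro ⟨Sl, hSl, rfl⟩
    apply psd_sum
    intro ℓ _
    have h1 := (hSl ℓ).conjTranspose_mul_mul_same (selector (C ℓ))
    rwa [conjTranspose_eq_transpose_of_trivial] at h1

end Final
end

section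
/- The cone of positive semidefinite completable matrices S^n_+(E,?) and the cone of sparse positive semidefinite matrices S^n_+(E,0) are dual cones of each other with respect to the trace inner product on the space S^n(E,0) of symmetric matrices with sparsity pattern E. -/
open Matrix

/-- Projection of a matrix onto the sparsity pattern given by the graph `G`
(keeping diagonal entries and entries indexed by edges of `G`). -/
def patternProj {n : ℕ} (G : SimpleGraph (Fin n)) [DecidableRel G.Adj]
    (Y : Matrix (Fin n) (Fin n) ℝ) : Matrix (Fin n) (Fin n) ℝ :=
  fun i j => if i = j ∨ G.Adj i j then Y i j else 0

namespace PsdDualAux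

open Finset
open scoped InnerProductSpace

variable {n : ℕ}

lemma herm_iff_symm (A : Matrix (Fin n) (Fin n) ℝ) : A.IsHermitian ↔ A.IsSymm := by
  rw [Matrix.IsHermitian, Matrix.conjTranspose_eq_transpose_of_trivial, Matrix.IsSymm]

lemma quadform (Y : Matrix (Fin n) (Fin n) ℝ) (x : Fin n → ℝ) :
    x ⬝ᵥ Y *ᵥ x = ∑ i, ∑ j, x i * Y i j * x j := by
  simp [dotProduct, mulVec, Finset.mul_sum, mul_assoc]

lemma psd_quad {Y : Matrix (Fin n) (Fin n) ℝ} (hY : Y.PosSemidef) (x : Fin n → ℝ) :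
    0 ≤ x ⬝ᵥ Y *ᵥ x := by
  have := hY.dotProduct_mulVec_nonneg x; rwa [star_trivial] at this

lemma psd_diag_nonneg {Y : Matrix (Fin n) (Fin n) ℝ} (hY : Y.PosSemidef) (i : Fin n) :
    0 ≤ Y i i := by
  have := psd_quad hY (Pi.single i 1)
  simpa [Matrix.mulVec_single, single_dotProduct] using this

lemma psd_diag_le_trace {Y : Matrix (Fin n) (Fin n) ℝ} (hY : Y.PosSemidef) (i : Fin n) :
    Y i i ≤ Y.trace :=
  Finset.single_le_sum (f := fun j => Y j j) (fun j _ => psd_diag_nonneg hY j) (Finset.mem_univ i)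

lemma psd_entry_bound {Y : Matrix (Fin n) (Fin n) ℝ} (hY : Y.PosSemidef) (i j : Fin n) :
    |Y i j| ≤ Y.trace := by
  rcases eq_or_ne i j with rfl | hij
  · rw [abs_of_nonneg (psd_diag_nonneg hY i)]; exact psd_diag_le_trace hY i
  · have hs : Y j i = Y i j := ((herm_iff_symm Y).1 hY.1).apply i j
    have key : ∀ c : ℝ, 0 ≤ Y i i + 2 * c * Y i j + c ^ 2 * Y j j := by
      intro c
      have h := psd_quad hY (Pi.single i 1 + Pi.single j c)
      rw [Matrix.mulVec_add, dotProduct_add, add_dotProduct,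
        add_dotProduct, Matrix.mulVec_single, Matrix.mulVec_single] at h
      simp only [single_dotProduct, Pi.smul_apply, Matrix.col_apply, op_smul_eq_mul] at h
      rw [hs] at h
      ring_nf at h ⊢
      linarith
    have h1 := key 1
    have h2 := key (-1)
    have hii := psd_diag_le_trace hY i
    have hjj := psd_diag_le_trace hY j
    rw [abs_le]; constructor <;> linarith

lemma vecMulVec_posSemidef (x : Fin n → ℝ) : (vecMulVec x x).PosSemidef := by
  refine Matrix.PosSemidef.of_dotProduct_mulVec_nonneg ?_ ?_
  · rw [herm_iff_symm]
    ext i j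
    simp [Matrix.vecMulVec_apply, mul_comm]
  · intro y
    rw [star_trivial]
    have h : vecMulVec x x *ᵥ y = (x ⬝ᵥ y) • x := by
      ext i
      simp only [Matrix.mulVec, Matrix.vecMulVec_apply, dotProduct, Pi.smul_apply, smul_eq_mul,
        Finset.sum_mul, Finset.mul_sum]
      exact Finset.sum_congr rfl fun k _ => by ring
    rw [h, dotProduct_smul, dotProduct_comm y x]
    simpa [smul_eq_mul] using mul_self_nonneg (x ⬝ᵥ y)

open scoped MatrixOrder in
lemma trace_mul_psd_nonneg {A S : Matrix (Fin n) (Fin n) ℝ} (hA : A.PosSemidef)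
    (hS : S.PosSemidef) : 0 ≤ (A * S).trace := by
  obtain ⟨B, rfl⟩ := CStarAlgebra.nonneg_iff_eq_star_mul_self.mp hS.nonneg
  rw [star_eq_conjTranspose, ← Matrix.mul_assoc, Matrix.trace_mul_cycle]
  have hP : (B * A * Bᴴ).PosSemidef := hA.mul_mul_conjTranspose_same B
  have h : 0 ≤ ∑ i, (B * A * Bᴴ) i i := by
    apply Finset.sum_nonneg
    intro i _
    have := hP.dotProduct_mulVec_nonneg (Pi.single i 1)
    simpa [Matrix.mulVec_single, single_dotProduct] using this
  simpa [Matrix.trace, Matrix.mul_assoc] using h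

lemma trace_mul_sum (A B : Matrix (Fin n) (Fin n) ℝ) (hA : A.IsSymm) :
    (A * B).trace = ∑ p : Fin n × Fin n, A p.1 p.2 * B p.1 p.2 := by
  rw [Matrix.trace, Fintype.sum_prod_type]
  simp only [Matrix.diag_apply, Matrix.mul_apply]
  rw [Finset.sum_comm]
  refine Finset.sum_congr rfl fun i _ => Finset.sum_congr rfl fun j _ => ?_
  rw [← hA.apply i j]

lemma sum_swap_prod (f : Fin n × Fin n → ℝ) :
    ∑ p : Fin n × Fin n, f p = ∑ p : Fin n × Fin n, f (p.2, p.1) :=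
  Fintype.sum_equiv (Equiv.prodComm _ _) _ _ (fun p => rfl)

lemma trace_mul_vecMulVec (A : Matrix (Fin n) (Fin n) ℝ) (x : Fin n → ℝ) :
    (A * vecMulVec x x).trace = x ⬝ᵥ A *ᵥ x := by
  rw [quadform, Matrix.trace]
  simp only [Matrix.diag_apply, Matrix.mul_apply, Matrix.vecMulVec_apply]
  exact Finset.sum_congr rfl fun i _ => Finset.sum_congr rfl fun j _ => by ring

abbrev Emat (n : ℕ) := EuclideanSpace ℝ (Fin n × Fin n)

def toE (M : Matrix (Fin n) (Fin n) ℝ) : Emat n := WithLp.toLp 2 (fun p => M p.1 p.2)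
def toM (v : Emat n) : Matrix (Fin n) (Fin n) ℝ := fun i j => v (i, j)

@[simp] lemma toM_toE (M : Matrix (Fin n) (Fin n) ℝ) : toM (toE M) = M := rfl
@[simp] lemma toE_apply (M : Matrix (Fin n) (Fin n) ℝ) (p : Fin n × Fin n) :
    toE M p = M p.1 p.2 := rfl
@[simp] lemma toM_apply (v : Emat n) (i j : Fin n) : toM v i j = v (i, j) := rfl

lemma toE_injective : Function.Injective (toE (n := n)) := by
  intro A B h
  ext i j
  exact congrFun (congrArg WithLp.ofLp h) (i, j)

lemma inner_toE_left (A : Matrix (Fin n) (Fin n) ℝ) (v : Emat n) :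
    ⟪toE A, v⟫_ℝ = ∑ p : Fin n × Fin n, A p.1 p.2 * v p := by
  simp [PiLp.inner_apply, RCLike.inner_apply, starRingEnd_apply]
  exact Finset.sum_congr rfl fun p _ => mul_comm _ _

lemma quad_eq (x : Fin n → ℝ) (v : Emat n) :
    ⟪toE (vecMulVec x x), v⟫_ℝ = x ⬝ᵥ (toM v) *ᵥ x := by
  rw [inner_toE_left]
  rw [Fintype.sum_prod_type]
  simp only [vecMulVec_apply, dotProduct, mulVec, toM_apply, Finset.mul_sum]
  exact Finset.sum_congr rfl fun i _ => Finset.sum_congr rfl fun j _ => by ring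

lemma trace_eq (v : Emat n) :
    ⟪toE (1 : Matrix (Fin n) (Fin n) ℝ), v⟫_ℝ = (toM v).trace := by
  rw [inner_toE_left, Fintype.sum_prod_type]
  simp [Matrix.one_apply, Matrix.trace, ite_mul, Finset.sum_ite_eq]

lemma symm_eq (i j : Fin n) (v : Emat n) :
    ⟪(EuclideanSpace.single (i,j) (1:ℝ) - EuclideanSpace.single (j,i) (1:ℝ)), v⟫_ℝ
      = v (i,j) - v (j,i) := by
  rw [inner_sub_left, EuclideanSpace.inner_single_left, EuclideanSpace.inner_single_left]
  simp

variable (G : SimpleGraph (Fin n)) [DecidableRel G.Adj]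

def projL : Emat n →ₗ[ℝ] Emat n where
  toFun v := toE (patternProj G (toM v))
  map_add' v w := by
    ext p
    simp only [toE_apply, patternProj, toM_apply, PiLp.add_apply]
    split <;> simp
  map_smul' c v := by
    ext p
    simp only [toE_apply, patternProj, toM_apply, PiLp.smul_apply, RingHom.id_apply,
      smul_eq_mul]
    split <;> simp

lemma isClosed_psd_slice (r : ℝ) :
    IsClosed {v : Emat n | (toM v).PosSemidef ∧ (toM v).trace ≤ r} := by
  have h1 : {v : Emat n | (toM v).PosSemidef ∧ (toM v).trace ≤ r} =
      ((⋂ i, ⋂ j, {v : Emat n | (⟪(EuclideanSpace.single (i,j) (1:ℝ) -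
          EuclideanSpace.single (j,i) (1:ℝ)), v⟫_ℝ : ℝ) = 0}) ∩
        (⋂ x : Fin n → ℝ, {v : Emat n | 0 ≤ ⟪toE (vecMulVec x x), v⟫_ℝ})) ∩
      {v : Emat n | ⟪toE (1 : Matrix (Fin n) (Fin n) ℝ), v⟫_ℝ ≤ r} := by
    ext v
    simp only [Set.mem_setOf_eq, Set.mem_inter_iff, Set.mem_iInter, symm_eq, quad_eq, trace_eq,
      sub_eq_zero]
    constructor
    · rintro ⟨hpsd, htr⟩
      refine ⟨⟨fun i j => ?_, fun x => ?_⟩, htr⟩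
      · exact ((herm_iff_symm _).1 hpsd.1).apply j i
      · have := hpsd.dotProduct_mulVec_nonneg x; rwa [star_trivial] at this
    · rintro ⟨⟨hsym, hquad⟩, htr⟩
      refine ⟨.of_dotProduct_mulVec_nonneg ((herm_iff_symm _).2 (Matrix.IsSymm.ext fun i j => ?_)) fun x => ?_, htr⟩
      · show v (j, i) = v (i, j)
        exact hsym j i
      · rw [star_trivial]; exact hquad x
  rw [h1]
  refine IsClosed.inter (IsClosed.inter ?_ ?_) ?_
  · exact isClosed_iInter fun i => isClosed_iInter fun j =>
      isClosed_eq ((innerSL ℝ _).continuous) continuous_const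
  · exact isClosed_iInter fun x =>
      IsClosed.preimage ((innerSL ℝ _).continuous) isClosed_Ici
  · exact IsClosed.preimage ((innerSL ℝ _).continuous) isClosed_Iic

lemma isCompact_psd_slice (r : ℝ) :
    IsCompact {v : Emat n | (toM v).PosSemidef ∧ (toM v).trace ≤ r} := by
  apply Metric.isCompact_of_isClosed_isBounded (isClosed_psd_slice r)
  rw [Metric.isBounded_iff_subset_closedBall 0]
  refine ⟨Real.sqrt ((Fintype.card (Fin n × Fin n)) * r ^ 2), fun v hv => ?_⟩
  obtain ⟨hpsd, htr⟩ := hv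
  rw [Metric.mem_closedBall, dist_zero_right, EuclideanSpace.norm_eq]
  apply Real.sqrt_le_sqrt
  have hb : ∀ p : Fin n × Fin n, ‖v p‖ ^ 2 ≤ r ^ 2 := by
    intro p
    have h1 : |v p| ≤ r := le_trans (psd_entry_bound hpsd p.1 p.2) htr
    have h0 : (0:ℝ) ≤ |v p| := abs_nonneg _
    calc ‖v p‖ ^ 2 = |v p| ^ 2 := by rw [Real.norm_eq_abs]
    _ ≤ r ^ 2 := by nlinarith
  calc ∑ p : Fin n × Fin n, ‖v p‖ ^ 2 ≤ ∑ _p : Fin n × Fin n, r ^ 2 :=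
        Finset.sum_le_sum fun p _ => hb p
  _ = (Fintype.card (Fin n × Fin n)) * r ^ 2 := by
        rw [Finset.sum_const, Finset.card_univ, nsmul_eq_mul]

noncomputable def compCone : ConvexCone ℝ (Emat n) where
  carrier := {v | ∃ Y : Matrix (Fin n) (Fin n) ℝ, Y.PosSemidef ∧ v = toE (patternProj G Y)}
  smul_mem' := by
    rintro c hc v ⟨Y, hY, rfl⟩
    refine ⟨c • Y, .of_dotProduct_mulVec_nonneg ?_ fun x => ?_, ?_⟩
    · rw [herm_iff_symm]
      have hs := (herm_iff_symm Y).1 hY.1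
      exact Matrix.IsSymm.ext fun i j => by simp [Matrix.smul_apply, hs.apply i j]
    · rw [star_trivial, Matrix.smul_mulVec, dotProduct_smul, smul_eq_mul]
      exact mul_nonneg hc.le (psd_quad hY x)
    · ext p
      simp only [PiLp.smul_apply, toE_apply, patternProj, Matrix.smul_apply, smul_eq_mul]
      split <;> simp
  add_mem' := by
    rintro v ⟨Y, hY, rfl⟩ w ⟨Z, hZ, rfl⟩
    refine ⟨Y + Z, hY.add hZ, ?_⟩
    ext p
    simp only [PiLp.add_apply, toE_apply, patternProj, Matrix.add_apply]
    split <;> simp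

lemma compCone_nonempty : ((compCone G : ConvexCone ℝ (Emat n)) : Set (Emat n)).Nonempty := by
  refine ⟨0, 0, ⟨?_, fun x => by simp⟩, ?_⟩
  · rw [herm_iff_symm]; exact Matrix.isSymm_zero
  · ext p
    simp [patternProj, toE_apply]

lemma compCone_nonempty' : (compCone G : ConvexCone ℝ (Emat n)).Pointed := by
  refine ⟨0, ⟨?_, fun x => by simp⟩, ?_⟩
  · rw [herm_iff_symm]; exact Matrix.isSymm_zero
  · ext p
    simp [patternProj, toE_apply]

lemma compCone_isClosed : IsClosed ((compCone G : ConvexCone ℝ (Emat n)) : Set (Emat n)) := by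
  apply IsSeqClosed.isClosed
  intro f z hf hz
  choose Y hY hfY using hf
  have htr : ∀ k, (Y k).trace = ⟪toE (1 : Matrix (Fin n) (Fin n) ℝ), f k⟫_ℝ := by
    intro k
    rw [trace_eq, hfY]
    simp only [toM_toE, Matrix.trace, Matrix.diag_apply]
    refine Finset.sum_congr rfl fun i _ => ?_
    simp [patternProj]
  have hcont : Continuous fun v : Emat n => ⟪toE (1 : Matrix (Fin n) (Fin n) ℝ), v⟫_ℝ :=
    (innerSL ℝ _).continuous
  have hconv : Filter.Tendsto (fun k => (Y k).trace) Filter.atTop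
      (nhds (⟪toE (1 : Matrix (Fin n) (Fin n) ℝ), z⟫_ℝ)) := by
    simp only [htr]
    exact (hcont.tendsto z).comp hz
  obtain ⟨r, hr⟩ := hconv.bddAbove_range
  have hmem : ∀ k, toE (Y k) ∈ {v : Emat n | (toM v).PosSemidef ∧ (toM v).trace ≤ r} := by
    intro k
    refine ⟨by rw [toM_toE]; exact hY k, ?_⟩
    rw [toM_toE]
    exact hr ⟨k, rfl⟩
  obtain ⟨a, ha, φ, hφ, hconv2⟩ := (isCompact_psd_slice r).tendsto_subseq hmem
  have hLcont : Continuous (projL G) := (projL G).continuous_of_finiteDimensional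
  have h1 : Filter.Tendsto (fun k => projL G (toE (Y (φ k)))) Filter.atTop (nhds (projL G a)) :=
    (hLcont.tendsto a).comp hconv2
  have h2 : ∀ k, projL G (toE (Y (φ k))) = f (φ k) := by
    intro k
    rw [hfY]
    rfl
  have h3 : Filter.Tendsto (fun k => f (φ k)) Filter.atTop (nhds z) :=
    hz.comp hφ.tendsto_atTop
  have hz' : z = projL G a := by
    apply tendsto_nhds_unique h3
    rw [show (fun k => f (φ k)) = fun k => projL G (toE (Y (φ k))) from funext fun k => (h2 k).symm]
    exact h1
  exact ⟨toM a, ha.1, hz'⟩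

end PsdDualAux

open PsdDualAux
open scoped InnerProductSpace

/-- The cones `S^n_+(E,?)` (projections onto the pattern of PSD matrices, i.e. the
positive semidefinite completable cone) and `S^n_+(E,0)` (PSD matrices supported on
the pattern) are dual to each other with respect to the trace inner product on the
space `S^n(E,0)` of symmetric matrices with sparsity pattern `E`. -/
theorem psd_completable_and_sparse_psd_cones_are_dual {n : ℕ}
    (G : SimpleGraph (Fin n)) [DecidableRel G.Adj]
    (X : Matrix (Fin n) (Fin n) ℝ) (hXsymm : X.IsSymm)
    (hXsupp : ∀ i j, i ≠ j → ¬ G.Adj i j → X i j = 0) :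
    ((∃ Y : Matrix (Fin n) (Fin n) ℝ, Y.PosSemidef ∧ X = patternProj G Y) ↔
      (∀ S : Matrix (Fin n) (Fin n) ℝ, S.PosSemidef →
        (∀ i j, i ≠ j → ¬ G.Adj i j → S i j = 0) → 0 ≤ (X * S).trace)) ∧
    (X.PosSemidef ↔
      (∀ Z : Matrix (Fin n) (Fin n) ℝ,
        (∃ Y : Matrix (Fin n) (Fin n) ℝ, Y.PosSemidef ∧ Z = patternProj G Y) →
        0 ≤ (X * Z).trace)) := by
  -- common facts
  have hpatX : ∀ p : Fin n × Fin n, ¬(p.1 = p.2 ∨ G.Adj p.1 p.2) → X p.1 p.2 = 0 := by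
    rintro ⟨i, j⟩ h
    push_neg at h
    exact hXsupp i j h.1 h.2
  constructor
  · constructor
    · -- completable → in dual cone of sparse PSD
      rintro ⟨Y, hY, hXY⟩ S hS hSsupp
      have hYsymm : Y.IsSymm := (herm_iff_symm Y).1 hY.1
      have h1 : (X * S).trace = (Y * S).trace := by
        rw [trace_mul_sum X S hXsymm, trace_mul_sum Y S hYsymm]
        refine Finset.sum_congr rfl fun p _ => ?_
        by_cases hp : p.1 = p.2 ∨ G.Adj p.1 p.2
        · rw [hXY]; simp [patternProj, hp]
        · push_neg at hp
          rw [hSsupp p.1 p.2 hp.1 hp.2, mul_zero, mul_zero]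
      rw [h1]
      exact trace_mul_psd_nonneg hY hS
    · -- in dual cone of sparse PSD → completable; the hard direction
      intro hdual
      by_contra hne
      have hnotmem : toE X ∉ (compCone G : ConvexCone ℝ (Emat n)) := by
        rintro ⟨Y, hY, hEq⟩
        exact hne ⟨Y, hY, toE_injective hEq⟩
      obtain ⟨w, hw1, hw2⟩ : ∃ w, (∀ x ∈ (compCone G : ConvexCone ℝ (Emat n)), 0 ≤ ⟪x, w⟫_ℝ) ∧
          ⟪w, toE X⟫_ℝ < 0 := by
        obtain ⟨w, hw1, hw2⟩ := ProperCone.hyperplane_separation'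
          { toSubmodule := (compCone G).toPointedCone (compCone_nonempty' G),
            isClosed' := compCone_isClosed G } hnotmem
        exact ⟨w, hw1, by rwa [real_inner_comm]⟩
      set W : Matrix (Fin n) (Fin n) ℝ := toM w with hW
      set PW : Matrix (Fin n) (Fin n) ℝ := patternProj G W with hPW
      set S : Matrix (Fin n) (Fin n) ℝ := (1/2 : ℝ) • (PW + PWᵀ) with hS
      have hpat_symm : ∀ i j : Fin n, (i = j ∨ G.Adj i j) ↔ (j = i ∨ G.Adj j i) := by
        intro i j
        rw [eq_comm, G.adj_comm]
      have hSsymm : S.IsSymm := by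
        refine Matrix.IsSymm.ext fun i j => ?_
        simp only [hS, Matrix.smul_apply, Matrix.add_apply, Matrix.transpose_apply, smul_eq_mul]
        ring
      have hSsupp : ∀ i j, i ≠ j → ¬ G.Adj i j → S i j = 0 := by
        intro i j hij hA
        have h1 : ¬(i = j ∨ G.Adj i j) := by push_neg; exact ⟨hij, hA⟩
        have h2 : ¬(j = i ∨ G.Adj j i) := fun h => h1 ((hpat_symm i j).2 h)
        simp only [hS, Matrix.smul_apply, Matrix.add_apply, Matrix.transpose_apply, hPW,
          patternProj, h1, h2, if_false, smul_eq_mul]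
        ring
      -- key computation on pattern sums against PW
      have key : ∀ A : Matrix (Fin n) (Fin n) ℝ, A.IsSymm →
          (∑ p : Fin n × Fin n, A p.1 p.2 * S p.1 p.2)
            = ⟪toE (patternProj G A), w⟫_ℝ := by
        intro A hA
        have e1 : (∑ p : Fin n × Fin n, A p.1 p.2 * PWᵀ p.1 p.2)
            = ∑ p : Fin n × Fin n, A p.1 p.2 * PW p.1 p.2 := by
          rw [sum_swap_prod (fun p => A p.1 p.2 * PWᵀ p.1 p.2)]
          refine Finset.sum_congr rfl fun p _ => ?_
          rw [Matrix.transpose_apply, hA.apply p.2 p.1]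
        have e2 : (∑ p : Fin n × Fin n, A p.1 p.2 * S p.1 p.2)
            = ∑ p : Fin n × Fin n, A p.1 p.2 * PW p.1 p.2 := by
          simp only [hS, Matrix.smul_apply, Matrix.add_apply, smul_eq_mul]
          have : ∀ p : Fin n × Fin n,
              A p.1 p.2 * (1/2 * (PW p.1 p.2 + PWᵀ p.1 p.2))
                = 1/2 * (A p.1 p.2 * PW p.1 p.2 + A p.1 p.2 * PWᵀ p.1 p.2) := by
            intro p; ring
          rw [Finset.sum_congr rfl fun p _ => this p, ← Finset.mul_sum,
            Finset.sum_add_distrib, e1]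
          ring
        rw [e2, inner_toE_left]
        refine Finset.sum_congr rfl fun p _ => ?_
        simp only [hPW, patternProj]
        by_cases hp : p.1 = p.2 ∨ G.Adj p.1 p.2
        · simp [hp, hW]
        · simp [hp]
      have hSpsd : S.PosSemidef := by
        refine .of_dotProduct_mulVec_nonneg ((herm_iff_symm S).2 hSsymm) fun x => ?_
        rw [star_trivial]
        have hQ : (vecMulVec x x).IsSymm := (herm_iff_symm _).1 (vecMulVec_posSemidef x).1
        have h1 : x ⬝ᵥ S *ᵥ x = (S * vecMulVec x x).trace := (trace_mul_vecMulVec S x).symm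
        have h2 : (S * vecMulVec x x).trace
            = ∑ p : Fin n × Fin n, (vecMulVec x x) p.1 p.2 * S p.1 p.2 := by
          rw [trace_mul_sum S _ hSsymm]
          exact Finset.sum_congr rfl fun p _ => by ring
        rw [h1, h2, key _ hQ]
        exact hw1 _ ⟨vecMulVec x x, vecMulVec_posSemidef x, rfl⟩
      -- contradiction
      have hXS : (X * S).trace = ⟪toE X, w⟫_ℝ := by
        rw [trace_mul_sum X S hXsymm, key X hXsymm]
        have hPX : patternProj G X = X := by
          ext i j
          simp only [patternProj]
          by_cases hp : i = j ∨ G.Adj i j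
          · simp [hp]
          · push_neg at hp
            simp [hp.1, hp.2, (hXsupp i j hp.1 hp.2).symm]
        rw [hPX]
      have h0 := hdual S hSpsd hSsupp
      rw [hXS] at h0
      rw [real_inner_comm] at h0
      exact absurd (lt_of_le_of_lt h0 hw2) (lt_irrefl 0)
  · constructor
    · -- X PSD → nonneg against completable matrices
      rintro hX Z ⟨Y, hY, rfl⟩
      have h1 : (X * patternProj G Y).trace = (X * Y).trace := by
        rw [trace_mul_sum X _ hXsymm, trace_mul_sum X Y hXsymm]
        refine Finset.sum_congr rfl fun p _ => ?_
        by_cases hp : p.1 = p.2 ∨ G.Adj p.1 p.2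
        · simp [patternProj, hp]
        · rw [hpatX p hp, zero_mul, zero_mul]
      rw [h1]
      exact trace_mul_psd_nonneg hX hY
    · -- nonneg against completable matrices → X PSD
      intro h
      refine .of_dotProduct_mulVec_nonneg ((herm_iff_symm X).2 hXsymm) fun x => ?_
      rw [star_trivial]
      have h0 := h (patternProj G (vecMulVec x x)) ⟨vecMulVec x x, vecMulVec_posSemidef x, rfl⟩
      have h1 : (X * patternProj G (vecMulVec x x)).trace = (X * vecMulVec x x).trace := by
        rw [trace_mul_sum X _ hXsymm, trace_mul_sum X _ hXsymm]
        refine Finset.sum_congr rfl fun p _ => ?_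
        by_cases hp : p.1 = p.2 ∨ G.Adj p.1 p.2
        · simp [patternProj, hp]
        · rw [hpatX p hp, zero_mul, zero_mul]
      rw [h1, trace_mul_vecMulVec] at h0
      exact h0
end

section
/- For any two vertex sets (cliques) C_i and C_j, if a symmetric matrix S can be written as T_i^T S_i T_i + T_j^T S_j T_j with S_i, S_j ⪰ 0, then S can be written as T_m^T S_m T_m with S_m ⪰ 0, where T_m is the entry-selector of the merged clique C_m = C_i ∪ C_j; hence merging cliques preserves membership in the decomposed dual feasible set. -/
open Matrix

/-- inclusion selector from a subset to a superset -/
def incl {n : ℕ} (C D : Finset (Fin n)) : Matrix C D ℝ :=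
  fun i k => if (i : Fin n) = (k : Fin n) then 1 else 0

lemma selector_factor {n : ℕ} (C D : Finset (Fin n)) (h : C ⊆ D) :
    selector C = incl C D * selector D := by
  ext i j
  simp only [Matrix.mul_apply, incl, selector]
  rw [Fintype.sum_eq_single (⟨(i : Fin n), h i.2⟩ : D)]
  · simp
  · intro k hk
    have : ¬ ((i : Fin n) = (k : Fin n)) := by
      intro he
      exact hk (Subtype.ext he.symm)
    simp [this]

/-- Merging cliques preserves membership in the decomposed dual feasible set:
if `S = T_iᵀ S_i T_i + T_jᵀ S_j T_j` with `S_i, S_j ⪰ 0`, then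
`S = T_mᵀ S_m T_m` for some `S_m ⪰ 0`, where `T_m` is the entry-selector of the
merged clique `C_m = C_i ∪ C_j`. -/
theorem merge_preserves_decomposition {n : ℕ} (Ci Cj : Finset (Fin n))
    (Si : Matrix Ci Ci ℝ) (Sj : Matrix Cj Cj ℝ)
    (hSi : Si.PosSemidef) (hSj : Sj.PosSemidef)
    (S : Matrix (Fin n) (Fin n) ℝ)
    (hS : S = (selector Ci)ᵀ * Si * selector Ci + (selector Cj)ᵀ * Sj * selector Cj) :
    ∃ Sm : Matrix (Ci ∪ Cj : Finset (Fin n)) (Ci ∪ Cj : Finset (Fin n)) ℝ,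
      Sm.PosSemidef ∧ S = (selector (Ci ∪ Cj))ᵀ * Sm * selector (Ci ∪ Cj) := by
  set Cm : Finset (Fin n) := Ci ∪ Cj
  have hci : Ci ⊆ Cm := Finset.subset_union_left
  have hcj : Cj ⊆ Cm := Finset.subset_union_right
  refine ⟨(incl Ci Cm)ᵀ * Si * incl Ci Cm + (incl Cj Cm)ᵀ * Sj * incl Cj Cm, ?_, ?_⟩
  · apply Matrix.PosSemidef.add
    · have := hSi.conjTranspose_mul_mul_same (incl Ci Cm)
      simpa [Matrix.conjTranspose_eq_transpose_of_trivial] using this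
    · have := hSj.conjTranspose_mul_mul_same (incl Cj Cm)
      simpa [Matrix.conjTranspose_eq_transpose_of_trivial] using this
  · rw [hS, selector_factor Ci Cm hci, selector_factor Cj Cm hcj]
    simp only [Matrix.transpose_mul, Matrix.add_mul, Matrix.mul_add]
    simp [Matrix.mul_assoc]
end

section
/- Let T(B,E) be a clique tree of a chordal graph satisfying the running-intersection property, and suppose the cliques C_i and C_j joined by an edge of T are merged into C_m = C_i ∪ C_j (with edges of both incident to the rest of the tree redirected to C_m). Then the resulting tree on the reduced clique set also satisfies the running-intersection property. -/
/-- The running-intersection property of a tree `T` on an index set of cliques `C`: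
for every pair of cliques, their intersection is contained in every clique on the
tree path joining them. -/
def RIP {ι α : Type*} [DecidableEq α] (T : SimpleGraph ι) (C : ι → Finset α) : Prop :=
  ∀ (i j : ι) (w : T.Walk i j), w.IsPath → ∀ k ∈ w.support, C i ∩ C j ⊆ C k

set_option linter.unusedSectionVars false

namespace MergeRIPAux

open SimpleGraph Walk

variable {ι : Type*} [DecidableEq ι]

def MG (T : SimpleGraph ι) (i j : ι) : SimpleGraph {k : ι // k ≠ j} :=
  SimpleGraph.fromRel (fun k l =>
      T.Adj k.1 l.1 ∨ (k.1 = i ∧ T.Adj j l.1) ∨ (l.1 = i ∧ T.Adj k.1 j))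

variable {T : SimpleGraph ι} {i j : ι}

lemma mg_adj {a b : {k : ι // k ≠ j}} :
    (MG T i j).Adj a b ↔ a ≠ b ∧
      (T.Adj a.1 b.1 ∨ (a.1 = i ∧ T.Adj j b.1) ∨ (b.1 = i ∧ T.Adj a.1 j)) := by
  unfold MG
  rw [SimpleGraph.fromRel_adj]
  have h1 := T.adj_comm a.1 b.1
  have h2 := T.adj_comm j b.1
  have h3 := T.adj_comm a.1 j
  have h4 := T.adj_comm j a.1
  have h5 := T.adj_comm b.1 j
  tauto

lemma adj_proj {a b : {k : ι // k ≠ j}} (ha : a.1 ≠ i) (hb : b.1 ≠ i)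
    (h : (MG T i j).Adj a b) : T.Adj a.1 b.1 := by
  rw [mg_adj] at h
  tauto

lemma ne_vi_of_val_ne {a : {k : ι // k ≠ j}} {h : i ≠ j} (ha : a.1 ≠ i) :
    a ≠ (⟨i, h⟩ : {k : ι // k ≠ j}) := fun hh => ha (by rw [hh])

lemma val_ne_of_ne_vi {a : {k : ι // k ≠ j}} {h : i ≠ j}
    (ha : a ≠ (⟨i, h⟩ : {k : ι // k ≠ j})) : a.1 ≠ i :=
  fun hh => ha (Subtype.ext hh)

lemma adj_vi (hij : T.Adj i j) {b : {k : ι // k ≠ j}}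
    (h : (MG T i j).Adj ⟨i, hij.ne⟩ b) :
    b.1 ≠ i ∧ (T.Adj i b.1 ∨ T.Adj j b.1) := by
  rw [mg_adj] at h
  obtain ⟨hne, hcase⟩ := h
  have hbi : b.1 ≠ i := fun hbi => hne (Subtype.ext hbi.symm)
  refine ⟨hbi, ?_⟩
  simp only at hcase
  tauto

/-- Project a walk avoiding `⟨i⟩` down to `T`. -/
lemma proj_walk {a b : {k : ι // k ≠ j}} (p : (MG T i j).Walk a b)
    (h : ∀ v ∈ p.support, v.1 ≠ i) :
    ∃ q : T.Walk a.1 b.1, q.support = p.support.map Subtype.val ∧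
      q.edges = p.edges.map (Sym2.map Subtype.val) := by
  induction p with
  | nil => exact ⟨Walk.nil, by simp, by simp⟩
  | @cons a c b h' p ih =>
    have ha : a.1 ≠ i := h a (by simp)
    have hc : c.1 ≠ i := h c (by simp)
    obtain ⟨q, hs, he⟩ := ih (fun v hv => h v (by simp [hv]))
    exact ⟨Walk.cons (adj_proj ha hc h') q, by simp [hs], by simp [he]⟩

lemma isPath_concat {V : Type*} {G : SimpleGraph V} {u v w : V} {p : G.Walk u v}
    (hp : p.IsPath) (h : G.Adj v w) (hw : w ∉ p.support) : (p.concat h).IsPath := by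
  rw [← isPath_reverse_iff, reverse_concat]
  exact hp.reverse.cons (by simpa [support_reverse] using hw)

/-- Lift a path in the merged graph ending at `⟨i⟩` to a path in `T` ending at `i` or `j`. -/
lemma lift_walk (hij : T.Adj i j) {a : {k : ι // k ≠ j}}
    (w : (MG T i j).Walk a ⟨i, hij.ne⟩) (hw : w.IsPath) (ha : a ≠ ⟨i, hij.ne⟩) :
    ∃ (t : ι) (P : T.Walk a.1 t) (L : List {k : ι // k ≠ j}),
      (t = i ∨ t = j) ∧ P.IsPath ∧
      w.support = L ++ [⟨i, hij.ne⟩] ∧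
      P.support = L.map Subtype.val ++ [t] ∧
      (⟨i, hij.ne⟩ : {k : ι // k ≠ j}) ∉ L := by
  have hnil : ¬ w.reverse.Nil := by
    intro hn
    exact ha (by simpa using hn.eq.symm)
  rw [not_nil_iff] at hnil
  obtain ⟨d, h, p', hrev⟩ := hnil
  have hw' : w = p'.reverse.concat h.symm := by
    have h2 : w.reverse.reverse = (cons h p').reverse := by rw [hrev]
    rwa [reverse_reverse, reverse_cons] at h2
  have hwp : w.reverse.IsPath := hw.reverse
  rw [hrev, cons_isPath_iff] at hwp
  obtain ⟨hp', hvi⟩ := hwp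
  have hq : p'.reverse.IsPath := hp'.reverse
  have hvimem : (⟨i, hij.ne⟩ : {k : ι // k ≠ j}) ∉ p'.reverse.support := by
    simpa [support_reverse] using hvi
  have hvall : ∀ v ∈ p'.reverse.support, v.1 ≠ i := by
    intro v hv hvi'
    exact hvimem (by
      rw [show (⟨i, hij.ne⟩ : {k : ι // k ≠ j}) = v from Subtype.ext hvi'.symm]
      exact hv)
  obtain ⟨Q, hQs, _⟩ := proj_walk p'.reverse hvall
  have hQpath : Q.IsPath := by
    apply IsPath.mk'
    rw [hQs]
    exact hq.support_nodup.map Subtype.val_injective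
  have hd := adj_vi hij h
  have hnotij : ∀ t : ι, (t = i ∨ t = j) → t ∉ Q.support := by
    intro t ht hmem
    rw [hQs] at hmem
    obtain ⟨v, hv, hveq⟩ := List.mem_map.mp hmem
    rcases ht with rfl | rfl
    · exact hvall v hv hveq
    · exact v.2 hveq
  rcases hd.2 with hdi | hdj
  · refine ⟨i, Q.concat hdi.symm, p'.reverse.support, Or.inl rfl,
      isPath_concat hQpath hdi.symm (hnotij i (Or.inl rfl)), ?_, ?_, hvimem⟩
    · rw [hw', support_concat]
    · rw [support_concat, hQs]
  · refine ⟨j, Q.concat hdj.symm, p'.reverse.support, Or.inr rfl,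
      isPath_concat hQpath hdj.symm (hnotij j (Or.inr rfl)), ?_, ?_, hvimem⟩
    · rw [hw', support_concat]
    · rw [support_concat, hQs]

variable {α : Type*} [DecidableEq α]

lemma key_M (hij : T.Adj i j) {C : ι → Finset α} (hRIP : RIP T C)
    {a : {k : ι // k ≠ j}} (w : (MG T i j).Walk a ⟨i, hij.ne⟩) (hw : w.IsPath)
    {x : α} (hxa : x ∈ (if a.1 = i then C i ∪ C j else C a.1)) (hx : x ∈ C i ∪ C j)
    {k : {k : ι // k ≠ j}} (hk : k ∈ w.support) :
    x ∈ (if k.1 = i then C i ∪ C j else C k.1) := by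
  by_cases ha : a = ⟨i, hij.ne⟩
  · subst ha
    rw [isPath_iff_eq_nil] at hw
    subst hw
    simp only [support_nil, List.mem_singleton] at hk
    subst hk
    simpa using hx
  · have hai : a.1 ≠ i := val_ne_of_ne_vi ha
    rw [if_neg hai] at hxa
    obtain ⟨t, P, L, ht, hP, hsupp, hPsupp, hL⟩ := lift_walk hij w hw ha
    have hLval : ∀ v ∈ L, v.1 ≠ i ∧ v.1 ≠ j := by
      intro v hv
      refine ⟨fun hvi => hL ?_, v.2⟩
      rw [show (⟨i, hij.ne⟩ : {k : ι // k ≠ j}) = v from Subtype.ext hvi.symm]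
      exact hv
    obtain ⟨t', htt', ht'ij, hct'⟩ : ∃ t', T.Adj t t' ∧ (t' = i ∨ t' = j) ∧
        C t ∪ C t' = C i ∪ C j := by
      rcases ht with rfl | rfl
      · exact ⟨j, hij, Or.inr rfl, rfl⟩
      · exact ⟨i, hij.symm, Or.inl rfl, Finset.union_comm _ _⟩
    have hnotmem : t' ∉ P.support := by
      rw [hPsupp]
      intro hmem
      rcases List.mem_append.mp hmem with hmem | hmem
      · obtain ⟨v, hv, hveq⟩ := List.mem_map.mp hmem
        rcases ht'ij with rfl | rfl
        · exact (hLval v hv).1 hveq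
        · exact (hLval v hv).2 hveq
      · rw [List.mem_singleton] at hmem
        exact htt'.ne hmem.symm
    have hkey : ∀ v ∈ P.support, x ∈ C v := by
      intro v hv
      have hx2 : x ∈ C t ∪ C t' := by rwa [hct']
      rcases Finset.mem_union.mp hx2 with hxt | hxt'
      · exact hRIP a.1 t P hP v hv (Finset.mem_inter.mpr ⟨hxa, hxt⟩)
      · exact hRIP a.1 t' (P.concat htt') (isPath_concat hP htt' hnotmem) v
          (by rw [support_concat]; exact List.mem_append_left _ hv)
          (Finset.mem_inter.mpr ⟨hxa, hxt'⟩)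
    rw [hsupp] at hk
    rcases List.mem_append.mp hk with hk | hk
    · rw [if_neg (hLval k hk).1]
      exact hkey k.1 (by rw [hPsupp]; exact List.mem_append_left _ (List.mem_map_of_mem hk))
    · rw [List.mem_singleton] at hk
      subst hk
      simpa using hx

lemma key_N (hij : T.Adj i j) {C : ι → Finset α} (hRIP : RIP T C)
    {a b : {k : ι // k ≠ j}}
    (w₁ : (MG T i j).Walk a ⟨i, hij.ne⟩) (hw₁ : w₁.IsPath)
    (w₂ : (MG T i j).Walk b ⟨i, hij.ne⟩) (hw₂ : w₂.IsPath)
    (ha : a ≠ ⟨i, hij.ne⟩) (hb : b ≠ ⟨i, hij.ne⟩)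
    (hdisj : ∀ k, k ∈ w₁.support → k ∈ w₂.support → k = ⟨i, hij.ne⟩)
    {x : α} (hxa : x ∈ C a.1) (hxb : x ∈ C b.1) : x ∈ C i ∪ C j := by
  obtain ⟨t₁, P₁, L₁, ht₁, hP₁, hs₁, hPs₁, hL₁⟩ := lift_walk hij w₁ hw₁ ha
  obtain ⟨t₂, P₂, L₂, ht₂, hP₂, hs₂, hPs₂, hL₂⟩ := lift_walk hij w₂ hw₂ hb
  have hLval₁ : ∀ v ∈ L₁, v.1 ≠ i ∧ v.1 ≠ j := by
    intro v hv
    refine ⟨fun hvi => hL₁ ?_, v.2⟩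
    rw [show (⟨i, hij.ne⟩ : {k : ι // k ≠ j}) = v from Subtype.ext hvi.symm]
    exact hv
  have hLval₂ : ∀ v ∈ L₂, v.1 ≠ i ∧ v.1 ≠ j := by
    intro v hv
    refine ⟨fun hvi => hL₂ ?_, v.2⟩
    rw [show (⟨i, hij.ne⟩ : {k : ι // k ≠ j}) = v from Subtype.ext hvi.symm]
    exact hv
  have hD : ∀ v : ι, v ∈ L₁.map Subtype.val → v ∈ L₂.map Subtype.val → False := by
    intro v h1 h2
    obtain ⟨u1, hu1, hequ1⟩ := List.mem_map.mp h1
    obtain ⟨u2, hu2, hequ2⟩ := List.mem_map.mp h2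
    have hu12 : u2 = u1 := Subtype.ext (hequ2.trans hequ1.symm)
    subst hu12
    have hvi := hdisj u2 (by rw [hs₁]; exact List.mem_append_left _ hu1)
      (by rw [hs₂]; exact List.mem_append_left _ hu2)
    rw [hvi] at hu1
    exact hL₁ hu1
  have hn₁ : (L₁.map Subtype.val).Nodup := by
    have h := hP₁.support_nodup
    rw [hPs₁] at h
    exact h.of_append_left
  have hn₂ : (L₂.map Subtype.val).Nodup := by
    have h := hP₂.support_nodup
    rw [hPs₂] at h
    exact h.of_append_left
  have ht₁L₁ : t₁ ∉ L₁.map Subtype.val := by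
    intro hmem
    obtain ⟨v, hv, hveq⟩ := List.mem_map.mp hmem
    rcases ht₁ with rfl | rfl
    · exact (hLval₁ v hv).1 hveq
    · exact (hLval₁ v hv).2 hveq
  have ht₁L₂ : t₁ ∉ L₂.map Subtype.val := by
    intro hmem
    obtain ⟨v, hv, hveq⟩ := List.mem_map.mp hmem
    rcases ht₁ with rfl | rfl
    · exact (hLval₂ v hv).1 hveq
    · exact (hLval₂ v hv).2 hveq
  have ht₂L₂ : t₂ ∉ L₂.map Subtype.val := by
    intro hmem
    obtain ⟨v, hv, hveq⟩ := List.mem_map.mp hmem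
    rcases ht₂ with rfl | rfl
    · exact (hLval₂ v hv).1 hveq
    · exact (hLval₂ v hv).2 hveq
  have hfinish : ∀ (P : T.Walk a.1 b.1), P.IsPath → t₁ ∈ P.support → x ∈ C i ∪ C j := by
    intro P hP hmem
    have hres := hRIP a.1 b.1 P hP t₁ hmem (Finset.mem_inter.mpr ⟨hxa, hxb⟩)
    rcases ht₁ with rfl | rfl
    · exact Finset.mem_union_left _ hres
    · exact Finset.mem_union_right _ hres
  by_cases hteq : t₁ = t₂
  · subst hteq
    set P : T.Walk a.1 b.1 := P₁.append P₂.reverse with hPdef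
    have hsupport : P.support = (L₁.map Subtype.val ++ [t₁]) ++ (L₂.map Subtype.val).reverse := by
      rw [hPdef, support_append, support_reverse, hPs₂, hPs₁]
      congr 1
      simp
    refine hfinish P (IsPath.mk' ?_) (by rw [hsupport]; simp)
    rw [hsupport]
    apply List.Nodup.append
    · apply List.Nodup.append hn₁ (List.nodup_singleton t₁)
      intro v hv1 hv2
      rw [List.mem_singleton] at hv2
      subst hv2
      exact ht₁L₁ hv1
    · exact List.nodup_reverse.mpr hn₂
    · intro v hv1 hv2
      rw [List.mem_reverse] at hv2
      rcases List.mem_append.mp hv1 with hv1 | hv1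
      · exact hD v hv1 hv2
      · rw [List.mem_singleton] at hv1
        subst hv1
        exact ht₁L₂ hv2
  · have htt : T.Adj t₁ t₂ := by
      rcases ht₁ with rfl | rfl <;> rcases ht₂ with rfl | rfl
      · exact absurd rfl hteq
      · exact hij
      · exact hij.symm
      · exact absurd rfl hteq
    set P : T.Walk a.1 b.1 := P₁.append (Walk.cons htt P₂.reverse) with hPdef
    have hsupport : P.support =
        (L₁.map Subtype.val ++ [t₁]) ++ (t₂ :: (L₂.map Subtype.val).reverse) := by
      rw [hPdef, support_append, support_cons, support_reverse, hPs₂, hPs₁]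
      congr 1
      simp
    refine hfinish P (IsPath.mk' ?_) (by rw [hsupport]; simp)
    rw [hsupport]
    apply List.Nodup.append
    · apply List.Nodup.append hn₁ (List.nodup_singleton t₁)
      intro v hv1 hv2
      rw [List.mem_singleton] at hv2
      subst hv2
      exact ht₁L₁ hv1
    · rw [List.nodup_cons]
      refine ⟨fun h => ht₂L₂ (List.mem_reverse.mp h), List.nodup_reverse.mpr hn₂⟩
    · intro v hv1 hv2
      rcases List.mem_cons.mp hv2 with hv2 | hv2
      · subst hv2
        rcases List.mem_append.mp hv1 with hv1 | hv1
        · obtain ⟨u, hu, hueq⟩ := List.mem_map.mp hv1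
          rcases ht₂ with rfl | rfl
          · exact (hLval₁ u hu).1 hueq
          · exact (hLval₁ u hu).2 hueq
        · rw [List.mem_singleton] at hv1
          exact hteq hv1.symm
      · rw [List.mem_reverse] at hv2
        rcases List.mem_append.mp hv1 with hv1 | hv1
        · exact hD v hv1 hv2
        · rw [List.mem_singleton] at hv1
          subst hv1
          exact ht₁L₂ hv2

lemma aux_same {hT : T.IsAcyclic} {u t : ι} (hadj : T.Adj t u) {P : T.Walk u t}
    (hP : P.IsPath) (hlen : 2 ≤ P.length) : False := by
  have heq : P = Walk.cons hadj.symm Walk.nil :=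
    Subtype.mk_eq_mk.mp (hT.path_unique ⟨P, hP⟩ (Path.singleton hadj.symm))
  rw [heq] at hlen
  simp at hlen

lemma aux_diff {hT : T.IsAcyclic} {u t₁ t₂ : ι} (h1 : T.Adj t₁ u) (htt : T.Adj t₁ t₂)
    (hu2 : u ≠ t₂) {P : T.Walk u t₂} (hP : P.IsPath) (ht₁P : t₁ ∉ P.support) : False := by
  have hQ : (Walk.cons h1.symm (Walk.cons htt Walk.nil)).IsPath := by
    rw [cons_isPath_iff, cons_isPath_iff]
    refine ⟨⟨IsPath.nil, by simp [htt.ne]⟩, by simp [h1.ne', hu2]⟩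
  have heq : P = Walk.cons h1.symm (Walk.cons htt Walk.nil) :=
    Subtype.mk_eq_mk.mp (hT.path_unique ⟨P, hP⟩ ⟨_, hQ⟩)
  apply ht₁P
  rw [heq]
  simp

lemma no_cycle_at_vi (hij : T.Adj i j) (hT : T.IsAcyclic)
    (d : (MG T i j).Walk ⟨i, hij.ne⟩ ⟨i, hij.ne⟩) (hd : d.IsCycle) : False := by
  have hlen := hd.three_le_length
  cases d with
  | nil => exact hd.ne_nil rfl
  | @cons _ b _ h p =>
    have hp : p.IsPath := ((cons_isCycle_iff p h).mp hd).1
    obtain ⟨hbne, hbadj⟩ := adj_vi hij h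
    have hbvi : b ≠ (⟨i, hij.ne⟩ : {k : ι // k ≠ j}) := ne_vi_of_val_ne hbne
    obtain ⟨t₂, P₂, L₂, ht₂, hP₂, hs₂, hPs₂, hL₂⟩ := lift_walk hij p hp hbvi
    have hLval₂ : ∀ v ∈ L₂, v.1 ≠ i ∧ v.1 ≠ j := by
      intro v hv
      refine ⟨fun hvi => hL₂ ?_, v.2⟩
      rw [show (⟨i, hij.ne⟩ : {k : ι // k ≠ j}) = v from Subtype.ext hvi.symm]
      exact hv
    have hlenP₂ : 2 ≤ P₂.length := by
      have e1 := congrArg List.length hs₂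
      have e2 := congrArg List.length hPs₂
      rw [length_support] at e1 e2
      simp only [List.length_append, List.length_map, List.length_singleton] at e1 e2
      simp only [length_cons] at hlen
      omega
    have ht₁ : ∃ t₁, (t₁ = i ∨ t₁ = j) ∧ T.Adj t₁ b.1 := by
      rcases hbadj with h1 | h1
      · exact ⟨i, Or.inl rfl, h1⟩
      · exact ⟨j, Or.inr rfl, h1⟩
    obtain ⟨t₁, ht₁ij, hadj⟩ := ht₁
    by_cases hteq : t₁ = t₂
    · subst hteq
      exact aux_same (hT := hT) hadj hP₂ hlenP₂
    · have htt : T.Adj t₁ t₂ := by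
        rcases ht₁ij with rfl | rfl <;> rcases ht₂ with rfl | rfl
        · exact absurd rfl hteq
        · exact hij
        · exact hij.symm
        · exact absurd rfl hteq
      have hbne2 : b.1 ≠ t₂ := by
        rcases ht₂ with rfl | rfl
        · exact hbne
        · exact b.2
      have ht₁P : t₁ ∉ P₂.support := by
        rw [hPs₂]
        intro hmem
        rcases List.mem_append.mp hmem with hmem | hmem
        · obtain ⟨v, hv, hveq⟩ := List.mem_map.mp hmem
          rcases ht₁ij with rfl | rfl
          · exact (hLval₂ v hv).1 hveq
          · exact (hLval₂ v hv).2 hveq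
        · rw [List.mem_singleton] at hmem
          exact hteq hmem
      exact aux_diff (hT := hT) hadj htt hbne2 hP₂ ht₁P

lemma no_cycle_avoid (hij : T.Adj i j) (hT : T.IsAcyclic) {a : {k : ι // k ≠ j}}
    (c : (MG T i j).Walk a a) (hc : c.IsCycle)
    (hvi : (⟨i, hij.ne⟩ : {k : ι // k ≠ j}) ∉ c.support) : False := by
  have hvall : ∀ v ∈ c.support, v.1 ≠ i := by
    intro v hv hvi'
    exact hvi (by
      rw [show (⟨i, hij.ne⟩ : {k : ι // k ≠ j}) = v from Subtype.ext hvi'.symm]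
      exact hv)
  obtain ⟨q, hs, he⟩ := proj_walk c hvall
  have hlen : q.length = c.length := by
    have h := congrArg List.length hs
    rw [length_support, List.length_map, length_support] at h
    omega
  refine hT q ⟨⟨⟨?_⟩, ?_⟩, ?_⟩
  · rw [he]
    exact hc.isTrail.edges_nodup.map (Sym2.map.injective Subtype.val_injective)
  · intro hnil
    rw [hnil] at hlen
    have h3 := hc.three_le_length
    simp at hlen
    omega
  · have h := hc.support_nodup
    have h2 : q.support.tail = c.support.tail.map Subtype.val := by
      rw [hs, List.map_tail]
    rw [h2]
    exact h.map Subtype.val_injective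

lemma mg_acyclic (hij : T.Adj i j) (hT : T.IsAcyclic) : (MG T i j).IsAcyclic := by
  intro a c hc
  by_cases hvi : (⟨i, hij.ne⟩ : {k : ι // k ≠ j}) ∈ c.support
  · exact no_cycle_at_vi hij hT (c.rotate _ hvi) (hc.rotate hvi)
  · exact no_cycle_avoid hij hT c hc hvi

lemma mg_connected (hij : T.Adj i j) (hT : T.Connected) : (MG T i j).Connected := by
  have hne := hij.ne
  set f : ι → {k : ι // k ≠ j} := fun k => if h : k = j then ⟨i, hne⟩ else ⟨k, h⟩ with hf
  have hfv : ∀ (k : ι) (h : k ≠ j), f k = ⟨k, h⟩ := fun k h => dif_neg h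
  have hfj : f j = ⟨i, hne⟩ := dif_pos rfl
  have hstep : ∀ x y, T.Adj x y → (MG T i j).Reachable (f x) (f y) := by
    intro x y hxy
    by_cases hfeq : f x = f y
    · rw [hfeq]
    · refine SimpleGraph.Adj.reachable ?_
      rw [mg_adj]
      refine ⟨hfeq, ?_⟩
      by_cases hxj : x = j
      · subst hxj
        rw [hfj, hfv y hxy.ne']
        right; left; exact ⟨rfl, hxy⟩
      · by_cases hyj : y = j
        · subst hyj
          rw [hfj, hfv x hxy.ne]
          right; right; exact ⟨rfl, hxy⟩
        · rw [hfv x hxj, hfv y hyj]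
          left; exact hxy
  have hreach : ∀ x y, T.Walk x y → (MG T i j).Reachable (f x) (f y) := by
    intro x y w
    induction w with
    | nil => exact Reachable.refl _
    | cons h p ih => exact (hstep _ _ h).trans ih
  haveI : Nonempty {k : ι // k ≠ j} := ⟨⟨i, hne⟩⟩
  refine ⟨fun u v => ?_⟩
  obtain ⟨w⟩ := hT.preconnected u.1 v.1
  have h := hreach u.1 v.1 w
  rwa [hfv u.1 u.2, hfv v.1 v.2] at h

end MergeRIPAux

/-- Merging two cliques `C i`, `C j` adjacent in a clique tree (replacing them by
their union and redirecting all former edges to the merged clique) yields a tree on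
the reduced clique set that again satisfies the running-intersection property. -/
theorem merge_adjacent_preserves_RIP {ι α : Type*} [DecidableEq ι] [DecidableEq α]
    (T : SimpleGraph ι) (hT : T.IsTree) (C : ι → Finset α) (hRIP : RIP T C)
    (i j : ι) (hij : T.Adj i j)
    -- the merged tree on the clique set with `j` removed and `i` replaced by `C i ∪ C j`
    (T' : SimpleGraph {k : ι // k ≠ j})
    (hT' : T' = SimpleGraph.fromRel (fun k l =>
      T.Adj k.1 l.1 ∨ (k.1 = i ∧ T.Adj j l.1) ∨ (l.1 = i ∧ T.Adj k.1 j)))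
    (C' : {k : ι // k ≠ j} → Finset α)
    (hC' : C' = fun k => if k.1 = i then C i ∪ C j else C k.1) :
    T'.IsTree ∧ RIP T' C' := by
  subst hT' hC'
  open MergeRIPAux SimpleGraph Walk in
  have hMG : (SimpleGraph.fromRel (fun (k l : {k : ι // k ≠ j}) =>
      T.Adj k.1 l.1 ∨ (k.1 = i ∧ T.Adj j l.1) ∨ (l.1 = i ∧ T.Adj k.1 j))) = MG T i j := rfl
  rw [hMG]
  constructor
  · exact ⟨MergeRIPAux.mg_connected hij hT.isConnected,
      MergeRIPAux.mg_acyclic hij hT.IsAcyclic⟩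
  · intro a b w hw k hk x hx
    show x ∈ (if k.1 = i then C i ∪ C j else C k.1)
    have hxa : x ∈ (if a.1 = i then C i ∪ C j else C a.1) := (Finset.mem_inter.mp hx).1
    have hxb : x ∈ (if b.1 = i then C i ∪ C j else C b.1) := (Finset.mem_inter.mp hx).2
    by_cases hvi : (⟨i, hij.ne⟩ : {k : ι // k ≠ j}) ∈ w.support
    · -- the merged vertex lies on the path
      have hw₁ := hw.takeUntil hvi
      have hw₂ := hw.dropUntil hvi
      have hsplit := SimpleGraph.Walk.take_spec w hvi
      have H : x ∈ C i ∪ C j := by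
        by_cases hA : a = ⟨i, hij.ne⟩
        · rw [hA] at hxa; simpa using hxa
        · by_cases hB : b = ⟨i, hij.ne⟩
          · rw [hB] at hxb; simpa using hxb
          · have hxa' : x ∈ C a.1 := by
              rwa [if_neg (MergeRIPAux.val_ne_of_ne_vi hA)] at hxa
            have hxb' : x ∈ C b.1 := by
              rwa [if_neg (MergeRIPAux.val_ne_of_ne_vi hB)] at hxb
            refine MergeRIPAux.key_N hij hRIP (w.takeUntil _ hvi) hw₁
              (w.dropUntil _ hvi).reverse hw₂.reverse hA hB ?_ hxa' hxb'
            intro kk h1 h2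
            rw [SimpleGraph.Walk.support_reverse, List.mem_reverse] at h2
            by_contra hkne
            have hnodup := hw.support_nodup
            rw [← hsplit, SimpleGraph.Walk.support_append] at hnodup
            have hdj := List.disjoint_of_nodup_append hnodup
            have h2' : kk ∈ (w.dropUntil _ hvi).support.tail := by
              rw [SimpleGraph.Walk.support_eq_cons] at h2
              rcases List.mem_cons.mp h2 with h2 | h2
              · exact absurd h2 hkne
              · exact h2
            exact hdj h1 h2'
      have hk' : k ∈ (w.takeUntil _ hvi).support ∨ k ∈ (w.dropUntil _ hvi).support := by
        rw [← hsplit, SimpleGraph.Walk.mem_support_append_iff] at hk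
        exact hk
      rcases hk' with hk1 | hk2
      · exact MergeRIPAux.key_M hij hRIP (w.takeUntil _ hvi) hw₁ hxa H hk1
      · exact MergeRIPAux.key_M hij hRIP (w.dropUntil _ hvi).reverse hw₂.reverse hxb H
          (by rwa [SimpleGraph.Walk.support_reverse, List.mem_reverse])
    · -- the merged vertex is not on the path
      have hvall : ∀ v ∈ w.support, v.1 ≠ i := by
        intro v hv hvi'
        exact hvi (by
          rw [show (⟨i, hij.ne⟩ : {k : ι // k ≠ j}) = v from Subtype.ext hvi'.symm]
          exact hv)
      obtain ⟨q, hs, _⟩ := MergeRIPAux.proj_walk w hvall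
      have hq : q.IsPath := SimpleGraph.Walk.IsPath.mk' (by
        rw [hs]
        exact hw.support_nodup.map Subtype.val_injective)
      have hres := hRIP a.1 b.1 q hq k.1 (by rw [hs]; exact List.mem_map_of_mem hk)
        (Finset.mem_inter.mpr ⟨by
          rwa [if_neg (hvall a (SimpleGraph.Walk.start_mem_support w))] at hxa, by
          rwa [if_neg (hvall b (SimpleGraph.Walk.end_mem_support w))] at hxb⟩)
      rw [if_neg (hvall k hk)]
      exact hres
end

section
/- The optimal values of the original dual SDP (maximize b^T y subject to Σ_i A_i y_i + S = C, S ⪰ 0, with the restriction S ∈ S^n(Ē,0)) and the range-space decomposed SDP (maximize b^T y subject to Σ_i A_i y_i + Σ_ℓ T_ℓ^T S_ℓ T_ℓ = C, S_ℓ ⪰ 0) are equal, given that G(V,Ē) is chordal with maximal cliques C_1,...,C_p. -/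
open Matrix

namespace RSD
open SimpleGraph

variable {V : Type*}

def indG (G : SimpleGraph V) (W : Set V) : SimpleGraph V where
  Adj x y := G.Adj x y ∧ x ∈ W ∧ y ∈ W
  symm := ⟨fun x y ⟨h, hx, hy⟩ => ⟨h.symm, hy, hx⟩⟩
  loopless := ⟨fun x ⟨h, _, _⟩ => G.loopless.irrefl x h⟩

lemma indG_adj {G : SimpleGraph V} {W : Set V} {x y : V} :
    (indG G W).Adj x y ↔ G.Adj x y ∧ x ∈ W ∧ y ∈ W := Iff.rfl

lemma walk_take {G : SimpleGraph V} {x y : V} (w : G.Walk x y) :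
    ∀ i, i ≤ w.length → ∃ w1 : G.Walk x (w.getVert i), w1.length = i := by
  induction w with
  | nil => intro i hi; simp at hi; subst hi; exact ⟨.nil, rfl⟩
  | cons h q ih =>
    intro i hi
    cases i with
    | zero => exact ⟨.nil, rfl⟩
    | succ j =>
      obtain ⟨w1, hw1⟩ := ih j (by simpa using hi)
      exact ⟨.cons h (w1.copy rfl (by simp [SimpleGraph.Walk.getVert_cons_succ])), by simp [hw1]⟩

lemma walk_drop {G : SimpleGraph V} {x y : V} (w : G.Walk x y) :
    ∀ i, i ≤ w.length → ∃ w2 : G.Walk (w.getVert i) y, w2.length = w.length - i := by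
  induction w with
  | nil => intro i hi; simp at hi; subst hi; exact ⟨.nil, rfl⟩
  | cons h q ih =>
    intro i hi
    cases i with
    | zero =>
      refine ⟨(Walk.cons h q).copy (Walk.getVert_zero _).symm rfl, by simp⟩
    | succ j =>
      obtain ⟨w2, hw2⟩ := ih j (by simpa using hi)
      exact ⟨w2.copy (by simp [SimpleGraph.Walk.getVert_cons_succ]) rfl, by simp [hw2]⟩

lemma min_walk_getVert_inj {G : SimpleGraph V} {x y : V} {w : G.Walk x y}
    (hmin : ∀ w' : G.Walk x y, w.length ≤ w'.length)
    {i j : ℕ} (hij : i < j) (hj : j ≤ w.length) :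
    w.getVert i ≠ w.getVert j := by
  intro h
  obtain ⟨w1, hw1⟩ := walk_take w i (le_trans (le_of_lt hij) hj)
  obtain ⟨w2, hw2⟩ := walk_drop w j hj
  have := hmin (w1.append (w2.copy h.symm rfl))
  rw [Walk.length_append, hw1] at this
  simp [hw2] at this
  omega

lemma min_walk_induced {G : SimpleGraph V} {x y : V} {w : G.Walk x y}
    (hmin : ∀ w' : G.Walk x y, w.length ≤ w'.length)
    {i j : ℕ} (hij : i + 1 < j) (hj : j ≤ w.length) :
    ¬ G.Adj (w.getVert i) (w.getVert j) := by
  intro hadj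
  obtain ⟨w1, hw1⟩ := walk_take w i (by omega)
  obtain ⟨w2, hw2⟩ := walk_drop w j hj
  have := hmin (w1.append (.cons hadj w2))
  rw [Walk.length_append, hw1] at this
  simp [hw2] at this
  omega

lemma walk_mem_end {G : SimpleGraph V} {W : Set V} {x y : V}
    (w : (indG G W).Walk x y) (hx : x ∈ W) : y ∈ W := by
  induction w with
  | nil => exact hx
  | cons h q ih => exact ih h.2.2

lemma reach_mem_end {G : SimpleGraph V} {W : Set V} {x y : V}
    (h : (indG G W).Reachable x y) (hx : x ∈ W) : y ∈ W := by
  obtain ⟨w⟩ := h; exact walk_mem_end w hx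

lemma walk_transfer {H H' : SimpleGraph V} {S : Set V}
    (hcl : ∀ x y, x ∈ S → H.Adj x y → y ∈ S)
    (hsub : ∀ x y, x ∈ S → y ∈ S → H.Adj x y → H'.Adj x y) :
    ∀ {x y : V}, H.Walk x y → x ∈ S → H'.Reachable x y := by
  intro x y w
  induction w with
  | nil => exact fun _ => Reachable.refl _
  | cons h q ih =>
    intro hx
    have hm := hcl _ _ hx h
    exact (Reachable.refl _).trans (((hsub _ _ hx hm h).reachable).trans (ih hm))

lemma reach_of_erase [DecidableEq V] {G : SimpleGraph V} {U T : Finset V} {a t : V}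
    (hat : a ≠ t)
    (hno : ∀ x, (indG G (↑U \ ↑T : Set V)).Reachable a x → ¬ G.Adj t x) :
    ∀ {y z : V}, (indG G (↑U \ ↑(T.erase t) : Set V)).Walk y z →
      y ≠ t → (indG G (↑U \ ↑T : Set V)).Reachable a y →
      z ≠ t ∧ (indG G (↑U \ ↑T : Set V)).Reachable a z := by
  intro y z w
  induction w with
  | nil => exact fun h1 h2 => ⟨h1, h2⟩
  | @cons x c z h q ih =>
    intro hy hr
    by_cases hct : c = t
    · subst hct
      exact absurd h.1.symm (hno x hr)
    · have hxW : x ∈ (↑U \ ↑T : Set V) := by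
        obtain ⟨hxu, hxe⟩ := h.2.1
        refine ⟨hxu, fun hxT => hxe ?_⟩
        simp only [Finset.mem_coe, Finset.mem_erase]
        exact ⟨hy, hxT⟩
      have hcW : c ∈ (↑U \ ↑T : Set V) := by
        obtain ⟨hcu, hce⟩ := h.2.2
        refine ⟨hcu, fun hcT => hce ?_⟩
        simp only [Finset.mem_coe, Finset.mem_erase]
        exact ⟨hct, hcT⟩
      have hadj : (indG G (↑U \ ↑T : Set V)).Adj x c := ⟨h.1, hxW, hcW⟩
      exact ih hct (hr.trans hadj.reachable)


variable {V : Type*}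

lemma chordal_no_induced_cycle {G : SimpleGraph V} (hch : IsChordal G)
    {N : ℕ} (hN : 3 < N) (g : ℕ → V)
    (ginj : ∀ k k', k < N → k' < N → g k = g k' → k = k')
    (gadj : ∀ k, k + 1 < N → G.Adj (g k) (g (k+1)))
    (gclose : G.Adj (g (N-1)) (g 0))
    (gind : ∀ k k', k < k' → k' < N → k' ≠ k + 1 → ¬(k = 0 ∧ k' = N - 1) →
      ¬ G.Adj (g k) (g k')) : False := by
  haveI : NeZero N := ⟨by omega⟩
  set f : ZMod N → V := fun i => g i.val with hf
  have hval : ∀ i : ZMod N, i.val < N := fun i => ZMod.val_lt i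
  have hvinj : ∀ i j : ZMod N, i.val = j.val → i = j := fun i j h =>
    ZMod.val_injective N h
  have hsucc : ∀ i : ZMod N, (i + 1).val = (i.val + 1) % N := by
    intro i
    rw [ZMod.val_add]
    have h1 : (1 : ZMod N).val = 1 := by
      haveI : Fact (1 < N) := ⟨by omega⟩
      exact ZMod.val_one N
    rw [h1]
  have hwrap : ∀ i : ZMod N, i.val = N - 1 → (i + 1).val = 0 := by
    intro i h
    rw [hsucc, h]
    have : N - 1 + 1 = N := by omega
    rw [this, Nat.mod_self]
  have hnow : ∀ i : ZMod N, i.val + 1 < N → (i + 1).val = i.val + 1 := by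
    intro i h
    rw [hsucc]
    exact Nat.mod_eq_of_lt h
  have finj : Function.Injective f := by
    intro i j h
    exact hvinj i j (ginj _ _ (hval i) (hval j) h)
  have fadj : ∀ i : ZMod N, G.Adj (f i) (f (i + 1)) := by
    intro i
    have hk := hval i
    rcases Nat.lt_or_ge (i.val + 1) N with h | h
    · show G.Adj (g i.val) (g (i+1).val)
      rw [hnow i h]
      exact gadj i.val h
    · have hN1 : i.val = N - 1 := by omega
      show G.Adj (g i.val) (g (i+1).val)
      rw [hwrap i hN1, hN1]
      exact gclose
  obtain ⟨i, j, h1, h2, h3, hadj⟩ := hch N hN f finj fadj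
  have hkk : i.val ≠ j.val := fun h => h1 (hvinj i j h)
  rcases Nat.lt_or_ge i.val j.val with hlt | hge
  · refine gind i.val j.val hlt (hval j) ?_ ?_ hadj
    · intro h
      have e := hnow i (by have := hval j; omega)
      exact h2 (hvinj j (i+1) (by rw [e]; exact h))
    · rintro ⟨h0, hN1⟩
      have e := hwrap j hN1
      exact h3 (hvinj i (j+1) (by rw [e]; exact h0))
  · have hlt : j.val < i.val := by omega
    refine gind j.val i.val hlt (hval i) ?_ ?_ hadj.symm
    · intro h
      have e := hnow j (by have := hval i; omega)
      exact h3 (hvinj i (j+1) (by rw [e]; exact h))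
    · rintro ⟨h0, hN1⟩
      have e := hwrap i hN1
      exact h2 (hvinj j (i+1) (by rw [e]; exact h0))

variable {V : Type*}


lemma sep_clique {G : SimpleGraph V} (hch : IsChordal G)
    {W : Set V} {a b : V}
    (haU : a ∈ W) (hbU : b ∈ W)
    (hsep : ¬ (indG G W).Reachable a b)
    {t u : V} (htW : t ∉ W) (huW : u ∉ W) (htu : t ≠ u)
    (hnbrAt : ∃ x, (indG G W).Reachable a x ∧ G.Adj t x)
    (hnbrAu : ∃ x, (indG G W).Reachable a x ∧ G.Adj u x)
    (hnbrBt : ∃ x, (indG G W).Reachable b x ∧ G.Adj t x)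
    (hnbrBu : ∃ x, (indG G W).Reachable b x ∧ G.Adj u x) :
    G.Adj t u := by
  classical
  by_contra hadj
  set H := indG G W with hH
  set compA : Set V := {x | H.Reachable a x} with hcompA
  set compB : Set V := {x | H.Reachable b x} with hcompB
  have hAsub : compA ⊆ W := fun x hx => reach_mem_end hx haU
  have hBsub : compB ⊆ W := fun x hx => reach_mem_end hx hbU
  have hABdisj : ∀ x, x ∈ compA → x ∈ compB → False := fun x h1 h2 =>
    hsep (h1.trans h2.symm)
  have hclA : ∀ x y, x ∈ compA → H.Adj x y → y ∈ compA := fun _ _ hx h =>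
    hx.trans h.reachable
  have hclB : ∀ x y, x ∈ compB → H.Adj x y → y ∈ compB := fun _ _ hx h =>
    hx.trans h.reachable
  have cross : ∀ x y, x ∈ compA → y ∈ compB → ¬ G.Adj x y := by
    intro x y hx hy h
    exact hABdisj y (hclA x y hx (indG_adj.mpr ⟨h, hAsub hx, hBsub hy⟩)) hy
  have htA : t ∉ compA := fun h => htW (hAsub h)
  have htB : t ∉ compB := fun h => htW (hBsub h)
  have huA : u ∉ compA := fun h => huW (hAsub h)
  have huB : u ∉ compB := fun h => huW (hBsub h)
  set SA : Set V := compA ∪ {t, u} with hSA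
  set SB : Set V := compB ∪ {t, u} with hSB
  have htSA : t ∈ SA := Or.inr (Or.inl rfl)
  have huSA : u ∈ SA := Or.inr (Or.inr rfl)
  have htSB : t ∈ SB := Or.inr (Or.inl rfl)
  have huSB : u ∈ SB := Or.inr (Or.inr rfl)
  set HA := indG G SA with hHA
  set HB := indG G SB with hHB
  -- reachability t-u in HA
  obtain ⟨xA, hxAr, hxAadj⟩ := hnbrAt
  obtain ⟨x'A, hx'Ar, hx'Aadj⟩ := hnbrAu
  have hxA : xA ∈ compA := hxAr
  have hx'A : x'A ∈ compA := hx'Ar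
  obtain ⟨wA⟩ := hxAr.symm.trans hx'Ar
  have hreachA : HA.Reachable t u := by
    have e1 : HA.Adj t xA := indG_adj.mpr ⟨hxAadj, htSA, Or.inl hxA⟩
    have e2 : HA.Adj x'A u := indG_adj.mpr ⟨hx'Aadj.symm, Or.inl hx'A, huSA⟩
    have mid : HA.Reachable xA x'A := by
      refine walk_transfer (S := compA) hclA ?_ wA hxA
      intro x y hx hy h
      exact indG_adj.mpr ⟨(indG_adj.mp h).1, Or.inl hx, Or.inl hy⟩
    exact (e1.reachable).trans (mid.trans e2.reachable)
  -- reachability u-t in HB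
  obtain ⟨xB, hxBr, hxBadj⟩ := hnbrBt
  obtain ⟨x'B, hx'Br, hx'Badj⟩ := hnbrBu
  have hxB : xB ∈ compB := hxBr
  have hx'B : x'B ∈ compB := hx'Br
  obtain ⟨wB⟩ := hx'Br.symm.trans hxBr
  have hreachB : HB.Reachable u t := by
    have e1 : HB.Adj u x'B := indG_adj.mpr ⟨hx'Badj, huSB, Or.inl hx'B⟩
    have e2 : HB.Adj xB t := indG_adj.mpr ⟨hxBadj.symm, Or.inl hxB, htSB⟩
    have mid : HB.Reachable x'B xB := by
      refine walk_transfer (S := compB) hclB ?_ wB hx'B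
      intro x y hx hy h
      exact indG_adj.mpr ⟨(indG_adj.mp h).1, Or.inl hx, Or.inl hy⟩
    exact (e1.reachable).trans (mid.trans e2.reachable)
  -- minimal walks
  have hexA : ∃ L, ∃ w : HA.Walk t u, w.length = L := ⟨_, hreachA.some, rfl⟩
  obtain ⟨pA, hpAlen⟩ := Nat.find_spec hexA
  have hminA : ∀ w' : HA.Walk t u, pA.length ≤ w'.length := fun w' => by
    rw [hpAlen]; exact Nat.find_min' hexA ⟨w', rfl⟩
  have hexB : ∃ L, ∃ w : HB.Walk u t, w.length = L := ⟨_, hreachB.some, rfl⟩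
  obtain ⟨pB, hpBlen⟩ := Nat.find_spec hexB
  have hminB : ∀ w' : HB.Walk u t, pB.length ≤ w'.length := fun w' => by
    rw [hpBlen]; exact Nat.find_min' hexB ⟨w', rfl⟩
  clear hpAlen hpBlen
  set LA := pA.length with hLAdef
  set LB := pB.length with hLBdef
  have hLA2 : 2 ≤ LA := by
    rcases Nat.lt_or_ge LA 2 with h | h
    · interval_cases LA
      · exact absurd (Walk.eq_of_length_eq_zero hLAdef.symm) htu
      · have h0 := pA.adj_getVert_succ (i := 0) (by omega)
        rw [pA.getVert_zero] at h0
        have h1 : pA.getVert 1 = u := by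
          have := pA.getVert_length
          rwa [← hLAdef] at this
        rw [h1] at h0
        exact absurd (indG_adj.mp h0).1 hadj
    · exact h
  have hLB2 : 2 ≤ LB := by
    rcases Nat.lt_or_ge LB 2 with h | h
    · interval_cases LB
      · exact absurd (Walk.eq_of_length_eq_zero hLBdef.symm).symm htu
      · have h0 := pB.adj_getVert_succ (i := 0) (by omega)
        rw [pB.getVert_zero] at h0
        have h1 : pB.getVert 1 = t := by
          have := pB.getVert_length
          rwa [← hLBdef] at this
        rw [h1] at h0
        exact absurd (indG_adj.mp h0).1.symm hadj
    · exact h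
  have memSA : ∀ k, k ≤ LA → pA.getVert k ∈ SA := by
    intro k hk
    cases k with
    | zero => rw [pA.getVert_zero]; exact htSA
    | succ j =>
      exact (indG_adj.mp (pA.adj_getVert_succ (i := j) (by omega))).2.2
  have memSB : ∀ k, k ≤ LB → pB.getVert k ∈ SB := by
    intro k hk
    cases k with
    | zero => rw [pB.getVert_zero]; exact huSB
    | succ j =>
      exact (indG_adj.mp (pB.adj_getVert_succ (i := j) (by omega))).2.2
  have pAt : pA.getVert 0 = t := pA.getVert_zero
  have pAu : pA.getVert LA = u := pA.getVert_length
  have pBu : pB.getVert 0 = u := pB.getVert_zero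
  have pBt : pB.getVert LB = t := pB.getVert_length
  have intA : ∀ k, 0 < k → k < LA → pA.getVert k ∈ compA := by
    intro k h0 hk
    rcases memSA k (le_of_lt hk) with h | h
    · exact h
    · exfalso
      rcases h with h | h
    -- h : pA.getVert k = t or = u
      · exact min_walk_getVert_inj hminA h0 (le_of_lt hk) (by rw [pAt, h])
      · exact min_walk_getVert_inj hminA hk (le_refl _) (by rw [pAu, h])
  have intB : ∀ k, 0 < k → k < LB → pB.getVert k ∈ compB := by
    intro k h0 hk
    rcases memSB k (le_of_lt hk) with h | h
    · exact h
    · exfalso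
      rcases h with h | h
      · exact min_walk_getVert_inj hminB hk (le_refl _) (by rw [pBt, h])
      · exact min_walk_getVert_inj hminB h0 (le_of_lt hk) (by rw [pBu, h])
  -- the cycle
  set N := LA + LB with hN
  set g : ℕ → V := fun k => if k ≤ LA then pA.getVert k else pB.getVert (k - LA) with hg
  have gA : ∀ k, k ≤ LA → g k = pA.getVert k := fun k hk => if_pos hk
  have gB : ∀ k, LA ≤ k → g k = pB.getVert (k - LA) := by
    intro k hk
    rcases eq_or_lt_of_le hk with h | h
    · subst h
      show (if LA ≤ LA then pA.getVert LA else pB.getVert (LA - LA)) = pB.getVert (LA - LA)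
      rw [if_pos (le_refl LA), Nat.sub_self, pBu, pAu]
    · exact if_neg (by omega)
  refine chordal_no_induced_cycle hch (N := N) (by omega) g ?_ ?_ ?_ ?_
  · -- injectivity
    have key : ∀ k k', k < k' → k' < N → g k = g k' → False := by
      intro k k' hkk' hk' heq
      rcases le_or_gt k' LA with h1 | h1
      · rw [gA k (by omega), gA k' h1] at heq
        exact min_walk_getVert_inj hminA hkk' h1 heq
      · rcases le_or_gt LA k with h2 | h2
        · rw [gB k h2, gB k' (by omega)] at heq
          exact min_walk_getVert_inj hminB (i := k - LA) (j := k' - LA)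
            (by omega) (by omega) heq
        · -- k < LA < k'
          rw [gA k (by omega), gB k' (by omega)] at heq
          have hB' : pB.getVert (k' - LA) ∈ compB := intB _ (by omega) (by omega)
          rcases Nat.eq_zero_or_pos k with h0 | h0
          · subst h0
            rw [pAt] at heq
            exact htB (heq ▸ hB')
          · have hA' : pA.getVert k ∈ compA := intA _ h0 h2
            exact hABdisj _ (heq ▸ hA') hB'
    intro k k' hk hk' heq
    rcases Nat.lt_trichotomy k k' with h | h | h
    · exact absurd heq (fun he => key k k' h hk' he)
    · exact h
    · exact absurd heq.symm (fun he => key k' k h hk he)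
  · -- adjacency
    intro k hk
    rcases Nat.lt_or_ge k LA with h | h
    · rw [gA k (by omega), gA (k+1) (by omega)]
      exact (indG_adj.mp (pA.adj_getVert_succ h)).1
    · rw [gB k h, gB (k+1) (by omega)]
      have : k + 1 - LA = (k - LA) + 1 := by omega
      rw [this]
      exact (indG_adj.mp (pB.adj_getVert_succ (i := k - LA) (by omega))).1
  · -- closing edge
    rw [gB (N-1) (by omega), gA 0 (by omega), pAt]
    have h1 : N - 1 - LA = LB - 1 := by omega
    rw [h1]
    have := (indG_adj.mp (pB.adj_getVert_succ (i := LB - 1) (by omega))).1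
    have h2 : LB - 1 + 1 = LB := by omega
    rw [h2, pBt] at this
    exact this
  · -- no chords
    intro k k' hkk' hk' hne hwrap hadj'
    rcases le_or_gt k' LA with h1 | h1
    · -- both on pA
      rw [gA k (by omega), gA k' h1] at hadj'
      exact min_walk_induced hminA (by omega) h1
        (indG_adj.mpr ⟨hadj', memSA k (by omega), memSA k' h1⟩)
    · rcases le_or_gt LA k with h2 | h2
      · -- both on pB
        rw [gB k h2, gB k' (by omega)] at hadj'
        exact min_walk_induced hminB (i := k - LA) (j := k' - LA) (by omega) (by omega)
          (indG_adj.mpr ⟨hadj', memSB _ (by omega), memSB _ (by omega)⟩)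
      · -- k < LA < k'
        rw [gA k (by omega), gB k' (by omega)] at hadj'
        have hjB : 0 < k' - LA ∧ k' - LA < LB := ⟨by omega, by omega⟩
        rcases Nat.eq_zero_or_pos k with h0 | h0
        · -- k = 0 : chord from t into pB
          subst h0
          rw [pAt] at hadj'
          have hlast : k' - LA + 1 < LB := by
            rcases Nat.lt_or_ge (k' - LA + 1) LB with h | h
            · exact h
            · exfalso; exact hwrap ⟨rfl, by omega⟩
          refine min_walk_induced hminB (i := k' - LA) (j := LB) (by omega) (le_refl _)
            (indG_adj.mpr ⟨?_, memSB _ (by omega), memSB _ (le_refl _)⟩)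
          rw [pBt]
          exact hadj'.symm
        · -- interior-interior cross
          exact cross _ _ (intA k h0 h2) (intB _ hjB.1 hjB.2) hadj'

variable {V : Type*}


def SimpIn (G : SimpleGraph V) (U : Finset V) (v : V) : Prop :=
  v ∈ U ∧ ∀ a ∈ U, ∀ b ∈ U, G.Adj v a → G.Adj v b → a ≠ b → G.Adj a b

lemma dirac_aux [Fintype V] [DecidableEq V] {G : SimpleGraph V} (hch : IsChordal G) :
    ∀ (N : ℕ) (U : Finset V), U.card ≤ N →
      (∀ x ∈ U, ∀ y ∈ U, x ≠ y → G.Adj x y) ∨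
      (∃ v w, v ≠ w ∧ ¬ G.Adj v w ∧ SimpIn G U v ∧ SimpIn G U w) := by
  intro N
  induction N with
  | zero =>
    intro U hU
    left
    intro x hx
    exact absurd (Finset.card_eq_zero.mp (Nat.le_zero.mp hU) ▸ hx) (Finset.notMem_empty x)
  | succ N IH =>
    intro U hU
    classical
    by_cases hclq : ∀ x ∈ U, ∀ y ∈ U, x ≠ y → G.Adj x y
    · exact Or.inl hclq
    push_neg at hclq
    obtain ⟨a, haU, b, hbU, hab, hnadj⟩ := hclq
    right
    -- separators
    set P : Finset V → Prop := fun T => T ⊆ U ∧ a ∉ T ∧ b ∉ T ∧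
      ¬ (indG G (↑U \ ↑T : Set V)).Reachable a b with hPdef
    have hP0 : P ((U.erase a).erase b) := by
      refine ⟨(Finset.erase_subset _ _).trans (Finset.erase_subset _ _), ?_, ?_, ?_⟩
      · intro h
        exact (Finset.mem_erase.mp (Finset.mem_of_mem_erase h)).1 rfl
      · intro h
        exact (Finset.mem_erase.mp h).1 rfl
      · intro h
        obtain ⟨w⟩ := h
        cases w with
        | nil => exact hab rfl
        | @cons _ c _ h q =>
          obtain ⟨hadj', _, hc⟩ := indG_adj.mp h
          obtain ⟨hcU, hcE⟩ := hc
          by_cases hcb : c = b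
          · exact hnadj (hcb ▸ hadj')
          · by_cases hca : c = a
            · exact G.loopless.irrefl a (hca ▸ hadj')
            · exact hcE (Finset.mem_coe.mpr (Finset.mem_erase.mpr ⟨hcb,
                Finset.mem_erase.mpr ⟨hca, Finset.mem_coe.mp hcU⟩⟩))
    have hSne : (Finset.univ.filter P).Nonempty :=
      ⟨_, Finset.mem_filter.mpr ⟨Finset.mem_univ _, hP0⟩⟩
    obtain ⟨T, hTmem, hTmin⟩ := Finset.exists_min_image (Finset.univ.filter P)
      Finset.card hSne
    have hT : P T := (Finset.mem_filter.mp hTmem).2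
    have hTmin' : ∀ T', P T' → T.card ≤ T'.card := fun T' h =>
      hTmin T' (Finset.mem_filter.mpr ⟨Finset.mem_univ _, h⟩)
    obtain ⟨hTU, haT, hbT, hsep⟩ := hT
    set Wst : Set V := ↑U \ ↑T with hWst
    set H := indG G Wst with hHdef
    have haW : a ∈ Wst := ⟨Finset.mem_coe.mpr haU, fun h => haT (Finset.mem_coe.mp h)⟩
    have hbW : b ∈ Wst := ⟨Finset.mem_coe.mpr hbU, fun h => hbT (Finset.mem_coe.mp h)⟩
    set compA : Set V := {x | H.Reachable a x} with hcompA
    set compB : Set V := {x | H.Reachable b x} with hcompB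
    have hAsub : compA ⊆ Wst := fun x hx => reach_mem_end hx haW
    have hBsub : compB ⊆ Wst := fun x hx => reach_mem_end hx hbW
    have hABdisj : ∀ x, x ∈ compA → x ∈ compB → _root_.False := fun x h1 h2 =>
      hsep (h1.trans h2.symm)
    have cross : ∀ x y, x ∈ compA → y ∈ compB → ¬ G.Adj x y := by
      intro x y hx hy h
      exact hABdisj y (hx.trans (indG_adj.mpr ⟨h, hAsub hx, hBsub hy⟩).reachable) hy
    -- neighbor claims
    have hnbrA : ∀ t ∈ T, ∃ x, H.Reachable a x ∧ G.Adj t x := by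
      intro t ht
      by_contra hno
      push_neg at hno
      have hat : a ≠ t := fun h => haT (h ▸ ht)
      have hbt : b ≠ t := fun h => hbT (h ▸ ht)
      have hr : (indG G (↑U \ ↑(T.erase t) : Set V)).Reachable a b := by
        by_contra hr
        have hPT' : P (T.erase t) :=
          ⟨(Finset.erase_subset _ _).trans hTU,
           fun h => haT (Finset.mem_of_mem_erase h),
           fun h => hbT (Finset.mem_of_mem_erase h), hr⟩
        have := hTmin' _ hPT'
        have hlt : (T.erase t).card < T.card := Finset.card_erase_lt_of_mem ht
        omega
      obtain ⟨wab⟩ := hr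
      exact hsep (reach_of_erase hat hno wab hat (Reachable.refl a)).2
    have hnbrB : ∀ t ∈ T, ∃ x, H.Reachable b x ∧ G.Adj t x := by
      intro t ht
      by_contra hno
      push_neg at hno
      have hat : b ≠ t := fun h => hbT (h ▸ ht)
      have hr : (indG G (↑U \ ↑(T.erase t) : Set V)).Reachable b a := by
        by_contra hr
        have hPT' : P (T.erase t) :=
          ⟨(Finset.erase_subset _ _).trans hTU,
           fun h => haT (Finset.mem_of_mem_erase h),
           fun h => hbT (Finset.mem_of_mem_erase h), ?_⟩
        · have := hTmin' _ hPT'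
          have hlt : (T.erase t).card < T.card := Finset.card_erase_lt_of_mem ht
          omega
        · exact fun h => hr h.symm
      obtain ⟨wab⟩ := hr
      exact hsep ((reach_of_erase hat hno wab hat (Reachable.refl b)).2).symm
    -- T is a clique
    have hTclq : ∀ t ∈ T, ∀ u ∈ T, t ≠ u → G.Adj t u := by
      intro t ht u hu htu
      exact sep_clique hch haW hbW hsep
        (fun h => h.2 (Finset.mem_coe.mpr ht)) (fun h => h.2 (Finset.mem_coe.mpr hu))
        htu (hnbrA t ht) (hnbrA u hu) (hnbrB t ht) (hnbrB u hu)
    -- the A side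
    have haA : a ∈ compA := Reachable.refl a
    have hbB : b ∈ compB := Reachable.refl b
    set Af : Finset V := U.filter (· ∈ compA) with hAf
    set Bf : Finset V := U.filter (· ∈ compB) with hBf
    set UA : Finset V := Af ∪ T with hUA
    set UB : Finset V := Bf ∪ T with hUB
    have hUAsub : UA ⊆ U := Finset.union_subset (Finset.filter_subset _ _) hTU
    have hUBsub : UB ⊆ U := Finset.union_subset (Finset.filter_subset _ _) hTU
    have hbUA : b ∉ UA := by
      intro h
      rcases Finset.mem_union.mp h with h | h
      · exact hsep ((Finset.mem_filter.mp h).2)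
      · exact hbT h
    have haUB : a ∉ UB := by
      intro h
      rcases Finset.mem_union.mp h with h | h
      · exact hsep ((Finset.mem_filter.mp h).2).symm
      · exact haT h
    have hcardA : UA.card ≤ N := by
      have : UA.card < U.card :=
        Finset.card_lt_card ⟨hUAsub, fun h => hbUA (h hbU)⟩
      omega
    have hcardB : UB.card ≤ N := by
      have : UB.card < U.card :=
        Finset.card_lt_card ⟨hUBsub, fun h => haUB (h haU)⟩
      omega
    -- membership closure: a neighbor (in U) of a compA vertex is in UA
    have hcloseA : ∀ v, v ∈ compA → ∀ z, z ∈ U → G.Adj v z → z ∈ UA := by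
      intro v hv z hz hadj
      by_cases hzT : z ∈ T
      · exact Finset.mem_union_right _ hzT
      · have hzW : z ∈ Wst := ⟨Finset.mem_coe.mpr hz, fun h => hzT (Finset.mem_coe.mp h)⟩
        have hzA : z ∈ compA := hv.trans (indG_adj.mpr ⟨hadj, hAsub hv, hzW⟩).reachable
        exact Finset.mem_union_left _ (Finset.mem_filter.mpr ⟨hz, hzA⟩)
    have hcloseB : ∀ v, v ∈ compB → ∀ z, z ∈ U → G.Adj v z → z ∈ UB := by
      intro v hv z hz hadj
      by_cases hzT : z ∈ T
      · exact Finset.mem_union_right _ hzT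
      · have hzW : z ∈ Wst := ⟨Finset.mem_coe.mpr hz, fun h => hzT (Finset.mem_coe.mp h)⟩
        have hzB : z ∈ compB := hv.trans (indG_adj.mpr ⟨hadj, hBsub hv, hzW⟩).reachable
        exact Finset.mem_union_left _ (Finset.mem_filter.mpr ⟨hz, hzB⟩)
    -- find simplicial vertex in compA
    have hsimpA : ∃ v, v ∈ compA ∧ SimpIn G UA v := by
      rcases IH UA hcardA with hclqA | ⟨v, w, hvw, hnadj', hsv, hsw⟩
      · exact ⟨a, haA, Finset.mem_union_left _ (Finset.mem_filter.mpr ⟨haU, haA⟩),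
          fun x hx y hy _ _ hxy => hclqA x hx y hy hxy⟩
      · have hnotboth : ¬ (v ∈ T ∧ w ∈ T) := fun ⟨h1, h2⟩ =>
          hnadj' (hTclq v h1 w h2 hvw)
        rcases Finset.mem_union.mp hsv.1 with h | h
        · exact ⟨v, (Finset.mem_filter.mp h).2, hsv⟩
        · rcases Finset.mem_union.mp hsw.1 with h' | h'
          · exact ⟨w, (Finset.mem_filter.mp h').2, hsw⟩
          · exact absurd ⟨h, h'⟩ hnotboth
    have hsimpB : ∃ v, v ∈ compB ∧ SimpIn G UB v := by
      rcases IH UB hcardB with hclqB | ⟨v, w, hvw, hnadj', hsv, hsw⟩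
      · exact ⟨b, hbB, Finset.mem_union_left _ (Finset.mem_filter.mpr ⟨hbU, hbB⟩),
          fun x hx y hy _ _ hxy => hclqB x hx y hy hxy⟩
      · have hnotboth : ¬ (v ∈ T ∧ w ∈ T) := fun ⟨h1, h2⟩ =>
          hnadj' (hTclq v h1 w h2 hvw)
        rcases Finset.mem_union.mp hsv.1 with h | h
        · exact ⟨v, (Finset.mem_filter.mp h).2, hsv⟩
        · rcases Finset.mem_union.mp hsw.1 with h' | h'
          · exact ⟨w, (Finset.mem_filter.mp h').2, hsw⟩
          · exact absurd ⟨h, h'⟩ hnotboth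
    obtain ⟨sA, hsAc, hsAm, hsAs⟩ := hsimpA
    obtain ⟨sB, hsBc, hsBm, hsBs⟩ := hsimpB
    have liftA : SimpIn G U sA := by
      refine ⟨hUAsub hsAm, ?_⟩
      intro x hx y hy hax hay hxy
      exact hsAs x (hcloseA sA hsAc x hx hax) y (hcloseA sA hsAc y hy hay) hax hay hxy
    have liftB : SimpIn G U sB := by
      refine ⟨hUBsub hsBm, ?_⟩
      intro x hx y hy hax hay hxy
      exact hsBs x (hcloseB sB hsBc x hx hax) y (hcloseB sB hsBc y hy hay) hax hay hxy
    exact ⟨sA, sB, fun h => hABdisj sA hsAc (h ▸ hsBc),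
      cross sA sB hsAc hsBc, liftA, liftB⟩

lemma exists_simplicial [Fintype V] [DecidableEq V] {G : SimpleGraph V}
    (hch : IsChordal G) (U : Finset V) (hne : U.Nonempty) : ∃ v, SimpIn G U v := by
  rcases dirac_aux hch U.card U (le_refl _) with hclq | ⟨v, _, _, _, hs, _⟩
  · obtain ⟨v, hv⟩ := hne
    exact ⟨v, hv, fun x hx y hy _ _ hxy => hclq x hx y hy hxy⟩
  · exact ⟨v, hs⟩

variable {n : ℕ}

lemma star_vec (x : Fin n → ℝ) : star x = x := funext fun _ => star_trivial _

lemma psd_qf {S : Matrix (Fin n) (Fin n) ℝ} (h : S.PosSemidef) (x : Fin n → ℝ) :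
    0 ≤ x ⬝ᵥ S *ᵥ x := by
  have := h.dotProduct_mulVec_nonneg x
  rwa [star_vec] at this

lemma psd_mk {S : Matrix (Fin n) (Fin n) ℝ} (h1 : S.IsHermitian)
    (h2 : ∀ x, 0 ≤ x ⬝ᵥ S *ᵥ x) : S.PosSemidef :=
  Matrix.PosSemidef.of_dotProduct_mulVec_nonneg h1 (fun x => by rw [star_vec]; exact h2 x)

lemma herm_apply {S : Matrix (Fin n) (Fin n) ℝ} (h : S.IsHermitian) (i j : Fin n) :
    S j i = S i j := by
  have := congrFun (congrFun h i) j
  rwa [conjTranspose_apply, star_trivial] at this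

lemma herm_mk {S : Matrix (Fin n) (Fin n) ℝ} (h : ∀ i j, S j i = S i j) :
    S.IsHermitian := by
  ext i j
  rw [conjTranspose_apply, star_trivial]
  exact h i j

lemma dot_single_right (S : Matrix (Fin n) (Fin n) ℝ) (x : Fin n → ℝ) (v : Fin n) :
    x ⬝ᵥ S *ᵥ (Pi.single v 1 : Fin n → ℝ) = ∑ i, x i * S i v := by
  rw [mulVec_single]
  simp [dotProduct]

lemma dot_single_left (S : Matrix (Fin n) (Fin n) ℝ) (x : Fin n → ℝ) (v : Fin n) :
    (Pi.single v 1 : Fin n → ℝ) ⬝ᵥ S *ᵥ x = ∑ j, S v j * x j := by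
  rw [single_dotProduct]
  simp [mulVec, dotProduct]

lemma dot_single_both (S : Matrix (Fin n) (Fin n) ℝ) (v w : Fin n) :
    (Pi.single v 1 : Fin n → ℝ) ⬝ᵥ S *ᵥ (Pi.single w 1 : Fin n → ℝ) = S v w := by
  rw [mulVec_single, single_dotProduct]
  simp

lemma dot_sub_single (S : Matrix (Fin n) (Fin n) ℝ) (x : Fin n → ℝ) (v : Fin n) (r : ℝ) :
    (x - r • (Pi.single v 1 : Fin n → ℝ)) ⬝ᵥ S *ᵥ (x - r • (Pi.single v 1 : Fin n → ℝ))
      = x ⬝ᵥ S *ᵥ x - r * (x ⬝ᵥ S *ᵥ (Pi.single v 1 : Fin n → ℝ))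
        - r * ((Pi.single v 1 : Fin n → ℝ) ⬝ᵥ S *ᵥ x)
        + r^2 * ((Pi.single v 1 : Fin n → ℝ) ⬝ᵥ S *ᵥ (Pi.single v 1 : Fin n → ℝ)) := by
  rw [mulVec_sub, mulVec_smul]
  rw [sub_dotProduct, smul_dotProduct, dotProduct_sub, dotProduct_sub]
  rw [dotProduct_smul, dotProduct_smul]
  simp only [smul_eq_mul]
  ring

/-- diagonal of psd is nonneg -/
lemma psd_diag_nonneg {S : Matrix (Fin n) (Fin n) ℝ} (h : S.PosSemidef) (v : Fin n) :
    0 ≤ S v v := by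
  have := psd_qf h (Pi.single v 1 : Fin n → ℝ)
  rwa [dot_single_both] at this

/-- psd with zero diagonal entry has zero row -/
lemma psd_row_zero {S : Matrix (Fin n) (Fin n) ℝ} (h : S.PosSemidef) (v : Fin n)
    (hv : S v v = 0) (j : Fin n) : S v j = 0 := by
  by_cases hvj : j = v
  · rw [hvj, hv]
  by_contra hne
  set a := S v j with ha
  set d := S j j with hd
  -- quadratic: for all c, 0 ≤ 2 c a + d
  have key : ∀ c : ℝ, 0 ≤ 2 * c * a + d := by
    intro c
    have hq := psd_qf h ((Pi.single j 1 : Fin n → ℝ) - (-c) • (Pi.single v 1 : Fin n → ℝ))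
    rw [dot_sub_single] at hq
    simp only [dot_single_both] at hq
    have hsymm : S j v = S v j := herm_apply h.1 v j
    rw [hsymm, hv] at hq
    nlinarith [hq]
  have := key (-(d + 1) / (2 * a))
  have h2a : (2:ℝ) * a ≠ 0 := by
    intro h'
    apply hne
    have : a = 0 := by linarith [h']
    exact this
  have : (0:ℝ) ≤ -(d+1) + d := by
    have e : 2 * (-(d + 1) / (2 * a)) * a = -(d+1) := by
      field_simp
    nlinarith [key (-(d + 1) / (2 * a)), e]
  linarith

section schur
variable {S : Matrix (Fin n) (Fin n) ℝ} {v : Fin n}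

lemma schur_decomp (hS : S.PosSemidef) (hd : 0 < S v v) :
    (Matrix.of fun i j => S i v * S v j / S v v).PosSemidef ∧
    (S - Matrix.of fun i j => S i v * S v j / S v v).PosSemidef := by
  set d := S v v with hdd
  set M1 : Matrix (Fin n) (Fin n) ℝ := Matrix.of fun i j => S i v * S v j / d with hM1
  have hM1app : ∀ i j, M1 i j = S i v * S v j / d := fun i j => rfl
  have hsymm : ∀ i j, S j i = S i j := herm_apply hS.1
  have hherm : M1.IsHermitian := by
    apply herm_mk
    intro i j
    rw [hM1app, hM1app, hsymm j v, hsymm v i]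
    ring
  have hqf : ∀ x : Fin n → ℝ,
      x ⬝ᵥ M1 *ᵥ x = (∑ j, S v j * x j) * (∑ j, S v j * x j) / d := by
    intro x
    set cx := ∑ j, S v j * x j with hcx
    have hmv : ∀ i, (M1 *ᵥ x) i = S i v * cx / d := by
      intro i
      show ∑ j, M1 i j * x j = _
      rw [hcx, Finset.mul_sum, eq_comm]
      rw [div_eq_mul_inv, Finset.sum_mul]
      apply Finset.sum_congr rfl
      intro j _
      rw [hM1app]
      ring
    show ∑ i, x i * (M1 *ᵥ x) i = _
    calc ∑ i, x i * (M1 *ᵥ x) i = ∑ i, (S v i * x i) * (cx / d) := by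
          apply Finset.sum_congr rfl
          intro i _
          rw [hmv, hsymm i v]
          ring
      _ = cx * cx / d := by
          rw [← Finset.sum_mul, ← hcx]
          ring
  constructor
  · refine psd_mk hherm ?_
    intro x
    rw [hqf]
    exact div_nonneg (mul_self_nonneg _) hd.le
  · refine psd_mk (hS.1.sub hherm) ?_
    intro x
    set cx := ∑ j, S v j * x j with hcx
    have h1 : x ⬝ᵥ (S - M1) *ᵥ x = x ⬝ᵥ S *ᵥ x - cx * cx / d := by
      rw [sub_mulVec, dotProduct_sub, hqf]
    rw [h1]
    have h2 := psd_qf hS (x - (cx / d) • (Pi.single v 1 : Fin n → ℝ))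
    rw [dot_sub_single, dot_single_right, dot_single_left, dot_single_both] at h2
    have e1 : ∑ i, x i * S i v = cx := by
      rw [hcx]
      apply Finset.sum_congr rfl
      intro i _
      rw [hsymm i v]
      ring
    rw [e1, ← hcx, ← hdd] at h2
    have hdne : d ≠ 0 := ne_of_gt hd
    have e2 : (cx / d)^2 * d = cx * cx / d := by
      field_simp
    have e3 : cx / d * cx = cx * cx / d := by ring
    linarith [h2, e2, e3]
end schur

section sel
variable {Cl : Finset (Fin n)}

lemma conj_real {α β : Type*} [Fintype α] [Fintype β] (B : Matrix α β ℝ) : Bᴴ = Bᵀ := by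
  ext i j
  rw [conjTranspose_apply, transpose_apply, star_trivial]

lemma sel_apply (a : Cl) (j : Fin n) :
    selector Cl a j = if (a : Fin n) = j then 1 else 0 := rfl

lemma sel_up_zero (Sl : Matrix Cl Cl ℝ) (i j : Fin n) (h : i ∉ Cl ∨ j ∉ Cl) :
    ((selector Cl)ᵀ * Sl * selector Cl) i j = 0 := by
  rw [Matrix.mul_apply]
  apply Finset.sum_eq_zero
  intro b _
  rcases h with h | h
  · rw [Matrix.mul_apply]
    have hz : ∀ a : Cl, (selector Cl)ᵀ i a * Sl a b = 0 := by
      intro a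
      have h0 : (selector Cl)ᵀ i a = 0 := by
        rw [transpose_apply, sel_apply]
        apply if_neg
        intro he
        exact h (he ▸ a.2)
      rw [h0, zero_mul]
    rw [Finset.sum_eq_zero (fun a _ => hz a), zero_mul]
  · have h0 : selector Cl b j = 0 := by
      rw [sel_apply]
      apply if_neg
      intro he
      exact h (he ▸ b.2)
    rw [h0, mul_zero]

lemma Q_apply (Cl : Finset (Fin n)) (i j : Fin n) :
    ((selector Cl)ᵀ * selector Cl) i j = if i = j ∧ j ∈ Cl then 1 else 0 := by
  rw [Matrix.mul_apply]
  have key : ∀ a : Cl, (selector Cl)ᵀ i a * selector Cl a j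
      = (fun x : Fin n => if x = i then (if x = j then (1:ℝ) else 0) else 0) ↑a := by
    intro a
    rw [transpose_apply, sel_apply, sel_apply]
    by_cases h : (↑a : Fin n) = i <;> simp [h, eq_comm]
  rw [Finset.sum_congr rfl (fun a _ => key a)]
  rw [Finset.sum_coe_sort Cl (fun x : Fin n => if x = i then (if x = j then (1:ℝ) else 0) else 0)]
  rw [Finset.sum_ite_eq' Cl i (fun x => if x = j then (1:ℝ) else 0)]
  by_cases h1 : i = j
  · subst h1
    by_cases h2 : i ∈ Cl <;> simp [h2]
  · by_cases h2 : i ∈ Cl <;> simp [h1, h2]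

lemma QMQ (Cl : Finset (Fin n)) (M : Matrix (Fin n) (Fin n) ℝ)
    (hsupp : ∀ i j, ¬(i ∈ Cl ∧ j ∈ Cl) → M i j = 0) :
    ((selector Cl)ᵀ * selector Cl) * M * ((selector Cl)ᵀ * selector Cl) = M := by
  set Q := (selector Cl)ᵀ * selector Cl with hQ
  have hQM : ∀ i k, (Q * M) i k = if i ∈ Cl then M i k else 0 := by
    intro i k
    rw [Matrix.mul_apply]
    have key : ∀ l, Q i l * M l k = if l = i then (if i ∈ Cl then M l k else 0) else 0 := by
      intro l
      rw [hQ, Q_apply]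
      by_cases h1 : l = i
      · subst h1
        by_cases h2 : l ∈ Cl <;> simp [h2]
      · rw [if_neg (fun hh : i = l ∧ l ∈ Cl => h1 hh.1.symm), if_neg h1, zero_mul]
    rw [Finset.sum_congr rfl (fun l _ => key l)]
    rw [Finset.sum_ite_eq' Finset.univ i (fun l => if i ∈ Cl then M l k else 0)]
    simp
  have hMQ : ∀ (M' : Matrix (Fin n) (Fin n) ℝ) i k,
      (M' * Q) i k = if k ∈ Cl then M' i k else 0 := by
    intro M' i k
    rw [Matrix.mul_apply]
    have key : ∀ l, M' i l * Q l k = if l = k then (if k ∈ Cl then M' i l else 0) else 0 := by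
      intro l
      rw [hQ, Q_apply]
      by_cases h1 : l = k
      · subst h1
        by_cases h2 : l ∈ Cl <;> simp [h2]
      · simp [h1]
    rw [Finset.sum_congr rfl (fun l _ => key l)]
    rw [Finset.sum_ite_eq' Finset.univ k (fun l => if k ∈ Cl then M' i l else 0)]
    simp
  ext i j
  rw [hMQ, hQM]
  by_cases h1 : i ∈ Cl
  · by_cases h2 : j ∈ Cl
    · rw [if_pos h2, if_pos h1]
    · rw [if_neg h2]
      exact (hsupp i j (fun hh => h2 hh.2)).symm
  · by_cases h2 : j ∈ Cl
    · rw [if_pos h2, if_neg h1]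
      exact (hsupp i j (fun hh => h1 hh.1)).symm
    · rw [if_neg h2]
      exact (hsupp i j (fun hh => h2 hh.2)).symm

lemma sel_reconstruct (Cl : Finset (Fin n)) (M : Matrix (Fin n) (Fin n) ℝ)
    (hsupp : ∀ i j, ¬(i ∈ Cl ∧ j ∈ Cl) → M i j = 0) :
    (selector Cl)ᵀ * (selector Cl * M * (selector Cl)ᵀ) * selector Cl = M := by
  have : (selector Cl)ᵀ * (selector Cl * M * (selector Cl)ᵀ) * selector Cl
      = ((selector Cl)ᵀ * selector Cl) * M * ((selector Cl)ᵀ * selector Cl) := by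
    simp only [Matrix.mul_assoc]
  rw [this, QMQ Cl M hsupp]

lemma psd_sel_down {M : Matrix (Fin n) (Fin n) ℝ} (hM : M.PosSemidef) :
    (selector Cl * M * (selector Cl)ᵀ).PosSemidef := by
  have := hM.mul_mul_conjTranspose_same (selector Cl)
  rwa [conj_real] at this

lemma psd_sel_up {Sl : Matrix Cl Cl ℝ} (hSl : Sl.PosSemidef) :
    ((selector Cl)ᵀ * Sl * selector Cl).PosSemidef := by
  have := hSl.conjTranspose_mul_mul_same (selector Cl)
  rwa [conj_real] at this

end sel

variable {n : ℕ}


lemma exists_maxclique_superset {G : SimpleGraph (Fin n)} {W : Finset (Fin n)}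
    (hW : G.IsClique (W : Set (Fin n))) : ∃ D, IsMaxClique G D ∧ W ⊆ D := by
  classical
  set F := Finset.univ.filter
    (fun D : Finset (Fin n) => G.IsClique (D : Set (Fin n)) ∧ W ⊆ D) with hF
  have hne : F.Nonempty :=
    ⟨W, Finset.mem_filter.mpr ⟨Finset.mem_univ _, hW, subset_rfl⟩⟩
  obtain ⟨D, hDmem, hDmax⟩ := Finset.exists_max_image F Finset.card hne
  obtain ⟨-, hDclq, hWD⟩ := Finset.mem_filter.mp hDmem
  refine ⟨D, ⟨hDclq, ?_⟩, hWD⟩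
  intro D' hD' hsub
  have hD'm : D' ∈ F := Finset.mem_filter.mpr ⟨Finset.mem_univ _, hD', hWD.trans hsub⟩
  exact Finset.eq_of_subset_of_card_le hsub (hDmax D' hD'm)

lemma agler {p : ℕ} {G : SimpleGraph (Fin n)} (hch : IsChordal G)
    {C : Fin p → Finset (Fin n)}
    (hcov : ∀ D : Finset (Fin n), IsMaxClique G D → ∃ ℓ, C ℓ = D) :
    ∀ (N : ℕ) (U : Finset (Fin n)) (S : Matrix (Fin n) (Fin n) ℝ), U.card ≤ N →
      S.PosSemidef →
      (∀ i j, i ≠ j → ¬ G.Adj i j → S i j = 0) →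
      (∀ i j, i ∉ U ∨ j ∉ U → S i j = 0) →
      ∃ M : Fin p → Matrix (Fin n) (Fin n) ℝ,
        (∀ ℓ, (M ℓ).PosSemidef) ∧
        (∀ ℓ i j, ¬(i ∈ C ℓ ∧ j ∈ C ℓ) → M ℓ i j = 0) ∧ ∑ ℓ, M ℓ = S := by
  intro N
  induction N with
  | zero =>
    intro U S hcard hpsd hpat hsupp
    have hU : U = ∅ := Finset.card_eq_zero.mp (Nat.le_zero.mp hcard)
    have hS0 : S = 0 := by
      ext i j
      exact hsupp i j (Or.inl (by rw [hU]; exact Finset.notMem_empty i))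
    exact ⟨fun _ => 0, fun _ => Matrix.PosSemidef.zero, fun _ _ _ _ => rfl,
      by rw [hS0]; exact Finset.sum_const_zero⟩
  | succ N IH =>
    intro U S hcard hpsd hpat hsupp
    classical
    rcases U.eq_empty_or_nonempty with hU | hne
    · have hS0 : S = 0 := by
        ext i j
        exact hsupp i j (Or.inl (by rw [hU]; exact Finset.notMem_empty i))
      exact ⟨fun _ => 0, fun _ => Matrix.PosSemidef.zero, fun _ _ _ _ => rfl,
        by rw [hS0]; exact Finset.sum_const_zero⟩
    obtain ⟨v, hvU, hsimp⟩ := exists_simplicial hch U hne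
    have hcard' : (U.erase v).card ≤ N := by
      rw [Finset.card_erase_of_mem hvU]
      have := Finset.card_pos.mpr hne
      omega
    by_cases hd : S v v = 0
    · -- zero row: shrink support
      have hrow : ∀ j, S v j = 0 := psd_row_zero hpsd v hd
      have hcol : ∀ i, S i v = 0 := fun i => (herm_apply hpsd.1 i v).symm ▸ hrow i
      apply IH (U.erase v) S hcard' hpsd hpat
      intro i j hij
      rcases hij with hij | hij
      · by_cases hiv : i = v
        · rw [hiv]; exact hrow j
        · exact hsupp i j (Or.inl (fun h => hij (Finset.mem_erase.mpr ⟨hiv, h⟩)))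
      · by_cases hjv : j = v
        · rw [hjv]; exact hcol i
        · exact hsupp i j (Or.inr (fun h => hij (Finset.mem_erase.mpr ⟨hjv, h⟩)))
    · have hd' : 0 < S v v := lt_of_le_of_ne (psd_diag_nonneg hpsd v) (Ne.symm hd)
      set Nv := U.filter (fun z => G.Adj v z) with hNv
      set W := insert v Nv with hWdef
      have hWclq : G.IsClique (W : Set (Fin n)) := by
        intro x hx y hy hxy
        rw [Finset.mem_coe, hWdef, Finset.mem_insert] at hx hy
        rcases hx with hx | hx
        · rcases hy with hy | hy
          · exact absurd (hx.trans hy.symm) hxy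
          · rw [hx]; exact (Finset.mem_filter.mp hy).2
        · rcases hy with hy | hy
          · rw [hy]; exact ((Finset.mem_filter.mp hx).2).symm
          · exact hsimp x (Finset.mem_filter.mp hx).1 y (Finset.mem_filter.mp hy).1
              (Finset.mem_filter.mp hx).2 (Finset.mem_filter.mp hy).2 hxy
      obtain ⟨D, hD, hWD⟩ := exists_maxclique_superset hWclq
      obtain ⟨ℓ₀, hl0⟩ := hcov D hD
      set M1 : Matrix (Fin n) (Fin n) ℝ :=
        Matrix.of fun i j => S i v * S v j / S v v with hM1def
      have hM1app : ∀ i j, M1 i j = S i v * S v j / S v v := fun i j => rfl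
      obtain ⟨hM1psd, hS'psd⟩ := schur_decomp hpsd hd'
      -- membership claims
      have hclaim_i : ∀ i, S i v ≠ 0 → i ∈ W := by
        intro i hi
        by_cases hiv : i = v
        · rw [hWdef, hiv]; exact Finset.mem_insert_self _ _
        · have hiU : i ∈ U := by
            by_contra hiU
            exact hi (hsupp i v (Or.inl hiU))
          have hadj : G.Adj v i := by
            by_contra hadj
            exact hi (hpat i v hiv (fun h => hadj h.symm))
          rw [hWdef]
          exact Finset.mem_insert_of_mem (Finset.mem_filter.mpr ⟨hiU, hadj⟩)
      have hclaim_j : ∀ j, S v j ≠ 0 → j ∈ W := by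
        intro j hj
        by_cases hjv : j = v
        · rw [hWdef, hjv]; exact Finset.mem_insert_self _ _
        · have hjU : j ∈ U := by
            by_contra hjU
            exact hj (hsupp v j (Or.inr hjU))
          have hadj : G.Adj v j := by
            by_contra hadj
            exact hj (hpat v j (fun h => hjv h.symm) hadj)
          rw [hWdef]
          exact Finset.mem_insert_of_mem (Finset.mem_filter.mpr ⟨hjU, hadj⟩)
      have hM1supp : ∀ i j, ¬(i ∈ C ℓ₀ ∧ j ∈ C ℓ₀) → M1 i j = 0 := by
        intro i j h
        rw [hM1app]
        by_cases h1 : S i v = 0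
        · rw [h1, zero_mul, zero_div]
        by_cases h2 : S v j = 0
        · rw [h2, mul_zero, zero_div]
        exact absurd ⟨hl0 ▸ hWD (hclaim_i i h1), hl0 ▸ hWD (hclaim_j j h2)⟩ h
      -- pattern for S - M1
      have hS'pat : ∀ i j, i ≠ j → ¬ G.Adj i j → (S - M1) i j = 0 := by
        intro i j hij hadj
        rw [Matrix.sub_apply, hpat i j hij hadj, hM1app]
        by_cases h1 : S i v = 0
        · rw [h1, zero_mul, zero_div, sub_zero]
        by_cases h2 : S v j = 0
        · rw [h2, mul_zero, zero_div, sub_zero]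
        exact absurd (hWclq (Finset.mem_coe.mpr (hclaim_i i h1))
          (Finset.mem_coe.mpr (hclaim_j j h2)) hij) hadj
      -- support for S - M1
      have hS'supp : ∀ i j, i ∉ U.erase v ∨ j ∉ U.erase v → (S - M1) i j = 0 := by
        intro i j hij
        rw [Matrix.sub_apply, hM1app]
        rcases hij with hij | hij
        · by_cases hiv : i = v
          · rw [hiv]
            rw [mul_comm, mul_div_assoc, div_self hd, mul_one, sub_self]
          · have hiU : i ∉ U := fun h => hij (Finset.mem_erase.mpr ⟨hiv, h⟩)
            rw [hsupp i j (Or.inl hiU), hsupp i v (Or.inl hiU), zero_mul, zero_div,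
              sub_zero]
        · by_cases hjv : j = v
          · rw [hjv]
            rw [mul_div_assoc, div_self hd, mul_one, sub_self]
          · have hjU : j ∉ U := fun h => hij (Finset.mem_erase.mpr ⟨hjv, h⟩)
            rw [hsupp i j (Or.inr hjU), hsupp v j (Or.inr hjU), mul_zero, zero_div,
              sub_zero]
      obtain ⟨M', hM'psd, hM'supp, hM'sum⟩ :=
        IH (U.erase v) (S - M1) hcard' hS'psd hS'pat hS'supp
      refine ⟨fun ℓ => M' ℓ + if ℓ = ℓ₀ then M1 else 0, ?_, ?_, ?_⟩
      · intro ℓ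
        refine (hM'psd ℓ).add ?_
        by_cases hl : ℓ = ℓ₀
        · rw [if_pos hl]; exact hM1psd
        · rw [if_neg hl]; exact Matrix.PosSemidef.zero
      · intro ℓ i j h
        show (M' ℓ + if ℓ = ℓ₀ then M1 else 0) i j = 0
        rw [Matrix.add_apply, hM'supp ℓ i j h]
        by_cases hl : ℓ = ℓ₀
        · subst hl
          rw [if_pos rfl, hM1supp i j h, zero_add]
        · rw [if_neg hl]
          simp
      · show (∑ ℓ, (M' ℓ + if ℓ = ℓ₀ then M1 else 0)) = S
        rw [Finset.sum_add_distrib, hM'sum, Finset.sum_ite_eq' Finset.univ ℓ₀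
          (fun _ => M1)]
        rw [if_pos (Finset.mem_univ _)]
        exact sub_add_cancel S M1

end RSD

/-- **Range-space decomposition preserves the optimal value.** For a chordal
extension `G(V,Ē)` with maximal cliques `C 1, …, C p`, the optimal value of the
dual SDP (with slack `S ⪰ 0` restricted to `S^n(Ē,0)`) equals that of the
range-space decomposed SDP (with clique slacks `S_ℓ ⪰ 0`). -/
theorem range_space_decomposition_same_value {n m p : ℕ}
    (G : SimpleGraph (Fin n)) (hchord : IsChordal G)
    (C : Fin p → Finset (Fin n))
    (hmax : ∀ ℓ, IsMaxClique G (C ℓ))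
    (hcov : ∀ D : Finset (Fin n), IsMaxClique G D → ∃ ℓ, C ℓ = D)
    (A : Fin m → Matrix (Fin n) (Fin n) ℝ) (Cmat : Matrix (Fin n) (Fin n) ℝ)
    (b : Fin m → ℝ)
    (hA : ∀ k, (A k).IsSymm ∧ ∀ i j, i ≠ j → ¬ G.Adj i j → A k i j = 0)
    (hC : Cmat.IsSymm ∧ ∀ i j, i ≠ j → ¬ G.Adj i j → Cmat i j = 0) :
    sSup {v : ℝ | ∃ (y : Fin m → ℝ) (S : Matrix (Fin n) (Fin n) ℝ),
        S.PosSemidef ∧ (∀ i j, i ≠ j → ¬ G.Adj i j → S i j = 0) ∧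
        (∑ k, y k • A k) + S = Cmat ∧ v = ∑ k, b k * y k} =
    sSup {v : ℝ | ∃ (y : Fin m → ℝ) (Sl : (ℓ : Fin p) → Matrix (C ℓ) (C ℓ) ℝ),
        (∀ ℓ, (Sl ℓ).PosSemidef) ∧
        (∑ k, y k • A k) + (∑ ℓ, (selector (C ℓ))ᵀ * Sl ℓ * selector (C ℓ)) = Cmat ∧
        v = ∑ k, b k * y k} := by
  classical
  congr 1
  ext val
  simp only [Set.mem_setOf_eq]
  constructor
  · rintro ⟨y, S, hSpsd, hSpat, heq, hval⟩
    obtain ⟨M, hMpsd, hMsupp, hMsum⟩ := RSD.agler hchord hcov Finset.univ.card Finset.univ S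
      le_rfl hSpsd hSpat
      (fun i j h => by rcases h with h | h <;> exact absurd (Finset.mem_univ _) h)
    refine ⟨y, fun ℓ => selector (C ℓ) * M ℓ * (selector (C ℓ))ᵀ,
      fun ℓ => RSD.psd_sel_down (hMpsd ℓ), ?_, hval⟩
    show (∑ k, y k • A k) + (∑ ℓ, (selector (C ℓ))ᵀ *
      (selector (C ℓ) * M ℓ * (selector (C ℓ))ᵀ) * selector (C ℓ)) = Cmat
    rw [Finset.sum_congr rfl (fun ℓ _ => RSD.sel_reconstruct (C ℓ) (M ℓ) (hMsupp ℓ)),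
      hMsum]
    exact heq
  · rintro ⟨y, Sl, hSlpsd, heq, hval⟩
    refine ⟨y, ∑ ℓ, (selector (C ℓ))ᵀ * Sl ℓ * selector (C ℓ), ?_, ?_, heq, hval⟩
    · exact Finset.sum_induction _ _ (fun a b ha hb => ha.add hb) Matrix.PosSemidef.zero
        (fun ℓ _ => RSD.psd_sel_up (hSlpsd ℓ))
    · intro i j hij hadj
      rw [Matrix.sum_apply]
      apply Finset.sum_eq_zero
      intro ℓ _
      by_cases h : i ∈ C ℓ ∧ j ∈ C ℓ
      · exact absurd ((hmax ℓ).1 (Finset.mem_coe.mpr h.1) (Finset.mem_coe.mpr h.2) hij)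
          hadj
      · exact RSD.sel_up_zero (Sl ℓ) i j (not_and_or.mp h)
end

section
/- In a chordal graph, two maximal cliques with nonempty intersection need not be adjacent (parent-child) or siblings in every clique tree: there exists a chordal graph and a valid clique tree in which two cliques C_1 and C_3 with |C_1 ∩ C_3| arbitrarily large are in a 'nephew-uncle' relationship (neither adjacent nor sharing a parent). -/
open SimpleGraph

instance pg4adj : DecidableRel (SimpleGraph.pathGraph 4).Adj :=
  fun _ _ => decidable_of_iff _ (SimpleGraph.pathGraph_adj).symm

lemma pg4_isTree : (SimpleGraph.pathGraph 4).IsTree := by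
  constructor
  · exact pathGraph_connected 3
  · intro v c hc
    have h3 : 3 ≤ c.length := hc.three_le_length
    have hnd : c.edges.Nodup := hc.edges_nodup
    have hle : c.length = 3 := by
      have hsub : c.edges.toFinset ⊆ (pathGraph 4).edgeFinset := fun e he =>
        mem_edgeFinset.mpr (c.edges_subset_edgeSet (List.mem_toFinset.mp he))
      have hcard := Finset.card_le_card hsub
      rw [List.toFinset_card_of_nodup hnd] at hcard
      have h3' : (pathGraph 4).edgeFinset.card = 3 := by decide
      have := c.length_edges
      omega
    have h3c : ∃ s : Finset (Fin 4), (pathGraph 4).IsNClique 3 s :=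
      is3Clique_iff_exists_cycle_length_three.mpr ⟨v, c, hc, hle⟩
    obtain ⟨s, hs⟩ := h3c
    rw [is3Clique_iff] at hs
    obtain ⟨x, y, z, hxy, hxz, hyz, -⟩ := hs
    rw [pathGraph_adj] at hxy hxz hyz
    omega

/-- Walks in the path graph have length at least the index distance. -/
lemma pg4_walk_length {u v : Fin 4} (w : (SimpleGraph.pathGraph 4).Walk u v) :
    ((u.val : ℤ) - v.val).natAbs ≤ w.length := by
  induction w with
  | nil => simp
  | cons h p ih =>
    rw [pathGraph_adj] at h
    rw [SimpleGraph.Walk.length_cons]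
    omega

lemma pg4_dist_ge (u v : Fin 4) :
    ((u.val : ℤ) - v.val).natAbs ≤ (SimpleGraph.pathGraph 4).dist u v := by
  obtain ⟨w, hw⟩ := ((pathGraph_connected 3).preconnected u v).exists_walk_length_eq_dist
  rw [← hw]
  exact pg4_walk_length w

lemma pg4_dist_le_of_walk {u v : Fin 4} (w : (SimpleGraph.pathGraph 4).Walk u v) :
    (SimpleGraph.pathGraph 4).dist u v ≤ w.length := SimpleGraph.dist_le w

/-- **"Nephew-uncle" merges exist.** For every `N` there is a chordal graph, a valid
rooted clique tree and two maximal cliques `C a`, `C b` whose overlap has size at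
least `N`, which are neither adjacent in the clique tree (parent-child) nor
siblings (sharing the same parent). -/
theorem nephew_uncle_exists (N : ℕ) :
    ∃ (n p : ℕ) (G : SimpleGraph (Fin n)) (C : Fin p → Finset (Fin n))
      (T : SimpleGraph (Fin p)) (r : Fin p) (par : Fin p → Fin p) (a b : Fin p),
      IsChordal G ∧
      (∀ ℓ, IsMaxClique G (C ℓ)) ∧
      (∀ D : Finset (Fin n), IsMaxClique G D → ∃ ℓ, C ℓ = D) ∧
      T.IsTree ∧ RIP T C ∧
      par r = r ∧
      (∀ ℓ, ℓ ≠ r → T.Adj ℓ (par ℓ) ∧ T.dist (par ℓ) r < T.dist ℓ r) ∧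
      a ≠ b ∧ N ≤ (C a ∩ C b).card ∧
      ¬ T.Adj a b ∧ par a ≠ par b := by
  classical
  refine ⟨N + 4, 4, SimpleGraph.fromRel (fun u v => u.val < N),
    fun i => Finset.univ.filter (fun v => v.val < N ∨ v.val = N + i.val),
    SimpleGraph.pathGraph 4, 0, ![0, 0, 1, 2], 1, 3, ?_, ?_, ?_, ?_, ?_, ?_, ?_, ?_, ?_, ?_, ?_⟩
  · -- chordal
    intro n hn f hinj hadj
    have hN : (f 0).val < N ∨ (f 1).val < N := by
      have := hadj 0
      rw [SimpleGraph.fromRel_adj] at this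
      simpa using this.2
    have key : ∀ i0 : ZMod n, (f i0).val < N →
        ∃ i j : ZMod n, i ≠ j ∧ j ≠ i + 1 ∧ i ≠ j + 1 ∧
          (SimpleGraph.fromRel (fun u v : Fin (N+4) => u.val < N)).Adj (f i) (f j) := by
      intro i0 hi0
      haveI : NeZero n := ⟨by omega⟩
      have hk : ∀ k : ℕ, 0 < k → k < n → ((k : ℕ) : ZMod n) ≠ 0 := by
        intro k hk1 hk2 h
        have hdvd := (ZMod.natCast_eq_zero_iff k n).mp h
        have := Nat.le_of_dvd hk1 hdvd
        omega
      have h1 : (1 : ZMod n) ≠ 0 := by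
        have := hk 1 (by omega) (by omega); simpa using this
      have h2 : (2 : ZMod n) ≠ 0 := by
        have := hk 2 (by omega) (by omega); simpa using this
      have h3 : (3 : ZMod n) ≠ 0 := by
        have := hk 3 (by omega) (by omega); simpa using this
      refine ⟨i0, i0 + 2, ?_, ?_, ?_, ?_⟩
      · intro h; exact h2 (by linear_combination -h)
      · intro h; exact h1 (by linear_combination h)
      · intro h; exact h3 (by linear_combination -h)
      · rw [SimpleGraph.fromRel_adj]
        refine ⟨fun h => ?_, Or.inl hi0⟩
        have := hinj h
        exact h2 (by linear_combination -this)
    rcases hN with h | h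
    · exact key 0 h
    · exact key 1 h
  · -- each C ℓ is a maximal clique
    intro i
    constructor
    · intro u hu v hv huv
      simp only [Finset.coe_filter, Set.mem_setOf_eq, Finset.mem_univ, true_and] at hu hv
      rw [SimpleGraph.fromRel_adj]
      refine ⟨huv, ?_⟩
      rcases hu with hu | hu
      · exact Or.inl hu
      · rcases hv with hv | hv
        · exact Or.inr hv
        · exact absurd (Fin.ext (hu.trans hv.symm)) huv
    · intro D hD hsub
      apply Finset.Subset.antisymm hsub
      intro v hv
      simp only [Finset.mem_filter, Finset.mem_univ, true_and]
      by_contra hvc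
      push_neg at hvc
      obtain ⟨hv1, hv2⟩ := hvc
      have hxi : (⟨N + i.val, by omega⟩ : Fin (N + 4)) ∈ D := by
        apply hsub
        simp
      have hne : v ≠ (⟨N + i.val, by omega⟩ : Fin (N + 4)) := by
        intro h
        exact hv2 (by rw [h])
      have := hD hv hxi hne
      rw [SimpleGraph.fromRel_adj] at this
      rcases this.2 with h | h
      · omega
      · simp only at h; omega
  · -- completeness of the clique enumeration
    intro D hD
    obtain ⟨hcl, hmax⟩ := hD
    by_cases hbig : ∃ v ∈ D, N ≤ v.val
    · obtain ⟨v, hvD, hvN⟩ := hbig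
      have hlt : v.val - N < 4 := by omega
      refine ⟨⟨v.val - N, hlt⟩, ?_⟩
      refine (hmax _ ?_ ?_).symm
      · -- C i is a clique
        intro u hu w hw huw
        simp only [Finset.coe_filter, Set.mem_setOf_eq, Finset.mem_univ, true_and] at hu hw
        rw [SimpleGraph.fromRel_adj]
        refine ⟨huw, ?_⟩
        rcases hu with hu | hu
        · exact Or.inl hu
        · rcases hw with hw | hw
          · exact Or.inr hw
          · exact absurd (Fin.ext (hu.trans hw.symm)) huw
      · intro w hw
        simp only [Finset.mem_filter, Finset.mem_univ, true_and]
        by_cases hwv : w = v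
        · right; subst hwv; omega
        · have := hcl hw hvD hwv
          rw [SimpleGraph.fromRel_adj] at this
          rcases this.2 with h | h
          · left; exact h
          · omega
    · push_neg at hbig
      refine ⟨0, ?_⟩
      refine (hmax _ ?_ ?_).symm
      · intro u hu w hw huw
        simp only [Finset.coe_filter, Set.mem_setOf_eq, Finset.mem_univ, true_and] at hu hw
        rw [SimpleGraph.fromRel_adj]
        refine ⟨huw, ?_⟩
        rcases hu with hu | hu
        · exact Or.inl hu
        · rcases hw with hw | hw
          · exact Or.inr hw
          · exact absurd (Fin.ext (hu.trans hw.symm)) huw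
      · intro w hw
        simp only [Finset.mem_filter, Finset.mem_univ, true_and]
        left
        exact hbig w hw
  · exact pg4_isTree
  · -- RIP
    intro i j w hw k hk
    by_cases hij : i = j
    · subst hij
      have : w = SimpleGraph.Walk.nil := SimpleGraph.Walk.isPath_iff_eq_nil.mp hw
      subst this
      simp only [SimpleGraph.Walk.support_nil, List.mem_singleton] at hk
      subst hk
      exact Finset.inter_subset_left
    · intro v hv
      simp only [Finset.mem_inter, Finset.mem_filter, Finset.mem_univ, true_and] at hv ⊢
      obtain ⟨hvi, hvj⟩ := hv
      left
      rcases hvi with h | h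
      · exact h
      · rcases hvj with h' | h'
        · exact h'
        · exfalso; apply hij; apply Fin.ext; omega
  · rfl
  · -- parent function decreases distance
    intro ℓ hℓ
    have hd : ∀ u v : Fin 4, ((u.val : ℤ) - v.val).natAbs ≤ (SimpleGraph.pathGraph 4).dist u v :=
      pg4_dist_ge
    fin_cases ℓ
    · exact absurd rfl hℓ
    · constructor
      · rw [pathGraph_adj]; decide
      · have h1 := hd 1 0
        have h0 : (SimpleGraph.pathGraph 4).dist 0 0 = 0 := SimpleGraph.dist_self
        show (SimpleGraph.pathGraph 4).dist 0 0 < (SimpleGraph.pathGraph 4).dist 1 0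
        rw [h0]
        omega
    · constructor
      · rw [pathGraph_adj]; decide
      · have h2 := hd 2 0
        have h10 : (SimpleGraph.pathGraph 4).Adj 1 0 := by rw [pathGraph_adj]; decide
        have hub : (SimpleGraph.pathGraph 4).dist 1 0 ≤ 1 := by
          have := SimpleGraph.dist_le (SimpleGraph.Walk.cons h10 SimpleGraph.Walk.nil)
          simpa using this
        show (SimpleGraph.pathGraph 4).dist 1 0 < (SimpleGraph.pathGraph 4).dist 2 0
        have : ((2 : Fin 4).val : ℤ) - ((0 : Fin 4).val : ℤ) = 2 := by decide
        omega
    · constructor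
      · rw [pathGraph_adj]; decide
      · have h3 := hd 3 0
        have h21 : (SimpleGraph.pathGraph 4).Adj 2 1 := by rw [pathGraph_adj]; decide
        have h10 : (SimpleGraph.pathGraph 4).Adj 1 0 := by rw [pathGraph_adj]; decide
        have hub : (SimpleGraph.pathGraph 4).dist 2 0 ≤ 2 := by
          have := SimpleGraph.dist_le
            (SimpleGraph.Walk.cons h21 (SimpleGraph.Walk.cons h10 SimpleGraph.Walk.nil))
          simpa using this
        show (SimpleGraph.pathGraph 4).dist 2 0 < (SimpleGraph.pathGraph 4).dist 3 0
        have : ((3 : Fin 4).val : ℤ) - ((0 : Fin 4).val : ℤ) = 3 := by decide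
        omega
  · decide
  · -- intersection is large
    have hsub : Finset.Iio (⟨N, by omega⟩ : Fin (N + 4)) ⊆
        (Finset.univ.filter (fun v : Fin (N+4) => v.val < N ∨ v.val = N + (1 : Fin 4).val)) ∩
        (Finset.univ.filter (fun v : Fin (N+4) => v.val < N ∨ v.val = N + (3 : Fin 4).val)) := by
      intro v hv
      rw [Finset.mem_Iio] at hv
      have : v.val < N := hv
      simp [this]
    calc N = (Finset.Iio (⟨N, by omega⟩ : Fin (N + 4))).card := by rw [Fin.card_Iio]
    _ ≤ _ := Finset.card_le_card hsub
  · rw [pathGraph_adj]; decide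
  · decide
end
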